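/- arXiv:2311.02070 — 8 statements merged into one kernel-verified Lean document; each statement's English description precedes it below -/
import Mathlib

section
/- Let G be a d-regular graph on n vertices that is not complete, with d ≤ n/2, and let λ₂ and λₙ be the second largest and smallest eigenvalues of its adjacency matrix. Then (1 + λ₂)·|λₙ| ≥ d/4. -/
open Finset Matrix

set_option maxHeartbeats 1000000

/-- Let `G` be a `d`-regular, non-complete graph on `n` vertices with `d ≤ n/2`, and let
`λ₂` and `λₙ` be the second largest and smallest eigenvalues of its adjacency matrix
(the eigenvalues, listed in nonincreasing order with an orthonormal eigenbasis, are
`lam 0 ≥ lam 1 ≥ ... ≥ lam (n-1)`). Then `(1 + λ₂)·|λₙ| ≥ d/4`. -/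
theorem stmt2 {n d : ℕ} (hn : 2 ≤ n) (G : SimpleGraph (Fin n)) [DecidableRel G.Adj]
    (hreg : G.IsRegularOfDegree d) (hG : G ≠ ⊤) (hd : 2 * d ≤ n)
    (v : Fin n → Fin n → ℝ) (lam : Fin n → ℝ)
    (hortho : ∀ i j, v i ⬝ᵥ v j = if i = j then (1 : ℝ) else 0)
    (heig : ∀ i, (G.adjMatrix ℝ) *ᵥ v i = lam i • v i)
    (hsort : ∀ i j : Fin n, i ≤ j → lam j ≤ lam i) :
    (d : ℝ) / 4 ≤ (1 + lam ⟨1, by omega⟩) * |lam ⟨n - 1, by omega⟩| := by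
  have h0n : 0 < n := by omega
  have h1n : 1 < n := by omega
  have hNn : n - 1 < n := by omega
  set i0 : Fin n := ⟨0, h0n⟩ with hi0
  set i1 : Fin n := ⟨1, h1n⟩ with hi1
  set iN : Fin n := ⟨n - 1, hNn⟩ with hiN
  set a := lam i1 with ha_def
  set b := lam iN with hb_def
  set A := G.adjMatrix ℝ with hA
  set P : Matrix (Fin n) (Fin n) ℝ := Matrix.of v with hP
  set D : Matrix (Fin n) (Fin n) ℝ := Matrix.diagonal lam with hD
  -- orthonormality in matrix form
  have hPPt : P * Pᵀ = 1 := by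
    ext i j
    have h := hortho i j
    simp only [dotProduct] at h
    simp [Matrix.mul_apply, hP, Matrix.one_apply, h]
  have hPtP : Pᵀ * P = 1 := mul_eq_one_comm.mp hPPt
  -- eigendecomposition
  have hAPt : A * Pᵀ = Pᵀ * D := by
    ext i j
    have h := congrFun (heig j) i
    simp only [Matrix.mulVec, dotProduct, Pi.smul_apply, smul_eq_mul] at h
    simp only [Matrix.mul_apply, Matrix.transpose_apply, hP, Matrix.of_apply, hD]
    have hrhs : ∑ k, v k i * Matrix.diagonal lam k j = lam j * v j i := by
      rw [Finset.sum_eq_single j (fun k _ hk => by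
        rw [Matrix.diagonal_apply_ne lam hk, mul_zero]) (by simp)]
      rw [Matrix.diagonal_apply_eq]; ring
    rw [hrhs]; exact h
  have hAdec : A = Pᵀ * D * P := by
    calc A = A * (Pᵀ * P) := by rw [hPtP, mul_one]
    _ = (A * Pᵀ) * P := by rw [Matrix.mul_assoc]
    _ = Pᵀ * D * P := by rw [hAPt]
  -- trace identities
  have htrD : ∀ E : Matrix (Fin n) (Fin n) ℝ, (Pᵀ * E * P).trace = E.trace := by
    intro E
    rw [Matrix.trace_mul_comm (Pᵀ * E) P, ← Matrix.mul_assoc, hPPt, Matrix.one_mul]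
  have hsum0 : ∑ i, lam i = 0 := by
    have h1 : A.trace = 0 := SimpleGraph.trace_adjMatrix ℝ G
    have h2 : A.trace = ∑ i, lam i := by
      rw [hAdec, htrD, hD, Matrix.trace_diagonal]
    rw [h2] at h1; exact h1
  have hsum2 : ∑ i, lam i * lam i = (n : ℝ) * d := by
    have h1 : (A * A).trace = (n : ℝ) * d := by
      rw [Matrix.trace]
      rw [Finset.sum_congr rfl (fun i _ => by
        show (A * A) i i = (d : ℝ)
        rw [hA, SimpleGraph.adjMatrix_mul_self_apply_self, hreg i])]
      simp [mul_comm]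
    have h2 : (A * A).trace = ∑ i, lam i * lam i := by
      have : A * A = Pᵀ * (D * D) * P := by
        rw [hAdec]
        calc Pᵀ * D * P * (Pᵀ * D * P) = Pᵀ * D * (P * Pᵀ) * D * P := by
              simp only [Matrix.mul_assoc]
        _ = Pᵀ * (D * D) * P := by rw [hPPt]; simp only [Matrix.mul_one, Matrix.mul_assoc]
      rw [this, htrD, hD, Matrix.diagonal_mul_diagonal, Matrix.trace_diagonal]
    rw [h2] at h1; exact h1
  -- everything is between b and lam i0, and lam i0 ≤ d  (Perron bound)
  have hle_a : ∀ i : Fin n, i ≠ i0 → lam i ≤ a := by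
    intro i hi
    exact hsort i1 i (by rw [Fin.le_def]; simp only [hi1]
                         have : (i : ℕ) ≠ 0 := fun h => hi (Fin.ext h)
                         omega)
  have hge_b : ∀ i : Fin n, b ≤ lam i := by
    intro i
    exact hsort i iN (by rw [Fin.le_def]; simp only [hiN]; omega)
  have hle_0 : ∀ i : Fin n, lam i ≤ lam i0 := fun i =>
    hsort i0 i (by rw [Fin.le_def]; simp only [hi0]; omega)
  have hPerron : lam i0 ≤ (d : ℝ) := by
    obtain ⟨t, -, ht⟩ := Finset.exists_max_image Finset.univ (fun s => |v i0 s|)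
      ⟨i0, Finset.mem_univ i0⟩
    have htpos : 0 < |v i0 t| := by
      by_contra h
      push_neg at h
      have hall : ∀ s, v i0 s = 0 := by
        intro s
        have := ht s (Finset.mem_univ s)
        have : |v i0 s| ≤ 0 := le_trans this h
        exact abs_eq_zero.mp (le_antisymm this (abs_nonneg _))
      have := hortho i0 i0
      simp [dotProduct, hall] at this
    have hkey : |lam i0| * |v i0 t| ≤ (d : ℝ) * |v i0 t| := by
      have h1 : (A *ᵥ v i0) t = lam i0 * v i0 t := by rw [heig i0]; simp
      have h2 : (A *ᵥ v i0) t = ∑ u ∈ G.neighborFinset t, v i0 u := by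
        rw [hA, SimpleGraph.adjMatrix_mulVec_apply]
      have h3 : |∑ u ∈ G.neighborFinset t, v i0 u| ≤ (d : ℝ) * |v i0 t| := by
        calc |∑ u ∈ G.neighborFinset t, v i0 u| ≤ ∑ u ∈ G.neighborFinset t, |v i0 u| :=
              Finset.abs_sum_le_sum_abs _ _
        _ ≤ ∑ _u ∈ G.neighborFinset t, |v i0 t| :=
              Finset.sum_le_sum (fun u _ => ht u (Finset.mem_univ u))
        _ = (d : ℝ) * |v i0 t| := by
              rw [Finset.sum_const, nsmul_eq_mul]
              congr 1
              rw [SimpleGraph.card_neighborFinset_eq_degree, hreg t]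
      rw [← abs_mul, ← h1, h2]; exact h3
    have := le_of_mul_le_mul_right hkey htpos
    exact le_trans (le_abs_self _) this
  -- b ≤ 0
  have hb0 : b ≤ 0 := by
    have h1 : (n : ℝ) * b ≤ ∑ i, lam i := by
      calc (n : ℝ) * b = ∑ _i : Fin n, b := by simp [mul_comm]
      _ ≤ ∑ i, lam i := Finset.sum_le_sum (fun i _ => hge_b i)
    rw [hsum0] at h1
    nlinarith [h1, show (0:ℝ) < n by exact_mod_cast h0n]
  -- a ≥ 0 : test vector supported on a non-edge
  have ha0 : 0 ≤ a := by
    obtain ⟨u, w, huw, hadj⟩ : ∃ u w : Fin n, u ≠ w ∧ ¬ G.Adj u w := by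
      by_contra h
      push_neg at h
      apply hG
      ext s t
      simp only [SimpleGraph.top_adj]
      exact ⟨fun h' => G.ne_of_adj h', fun h' => h s t h'⟩
    obtain ⟨α, β, hcomb, hpos⟩ :
        ∃ α β : ℝ, α * v i0 u + β * v i0 w = 0 ∧ 0 < α ^ 2 + β ^ 2 := by
      by_cases hp : v i0 u = 0 ∧ v i0 w = 0
      · exact ⟨1, 0, by simp [hp.1], by norm_num⟩
      · refine ⟨v i0 w, -(v i0 u), by ring, ?_⟩
        rcases not_and_or.mp hp with h | h
        · nlinarith [sq_pos_of_ne_zero h, sq_nonneg (v i0 w)]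
        · nlinarith [sq_pos_of_ne_zero h, sq_nonneg (v i0 u)]
    set x : Fin n → ℝ :=
      fun t => (if t = u then α else 0) + (if t = w then β else 0) with hx
    have hdotx : ∀ y : Fin n → ℝ, y ⬝ᵥ x = y u * α + y w * β := by
      intro y
      simp [dotProduct, hx, mul_add, Finset.sum_add_distrib, mul_ite, mul_zero,
        Finset.sum_ite_eq']
    set c : Fin n → ℝ := P *ᵥ x with hc
    have hci : ∀ i, c i = v i u * α + v i w * β := by
      intro i
      rw [hc]
      show (Matrix.of v i) ⬝ᵥ x = _
      exact hdotx (v i)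
    have hc0 : c i0 = 0 := by rw [hci]; nlinarith [hcomb]
    -- Rayleigh identities
    have hAx : x ⬝ᵥ (A *ᵥ x) = ∑ i, c i * (lam i * c i) := by
      rw [hAdec, ← Matrix.mulVec_mulVec, ← Matrix.mulVec_mulVec,
        Matrix.dotProduct_mulVec, Matrix.vecMul_transpose, ← hc]
      simp [dotProduct, Matrix.mulVec_diagonal, hD]
    have hxx : x ⬝ᵥ x = c ⬝ᵥ c := by
      have hxPc : x = Pᵀ *ᵥ c := by
        rw [hc, Matrix.mulVec_mulVec, hPtP, Matrix.one_mulVec]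
      conv_lhs => rw [hxPc]
      rw [Matrix.dotProduct_mulVec, Matrix.vecMul_transpose, Matrix.mulVec_mulVec,
        hPPt, Matrix.one_mulVec]
    -- x^T A x = 0
    have hAxz : x ⬝ᵥ (A *ᵥ x) = 0 := by
      have h1 : ∀ t, (A *ᵥ x) t = A t u * α + A t w * β := by
        intro t
        show (A t) ⬝ᵥ x = _
        exact hdotx (A t)
      have h2 : x ⬝ᵥ (A *ᵥ x) = (A *ᵥ x) u * α + (A *ᵥ x) w * β := by
        have : ∀ y : Fin n → ℝ, x ⬝ᵥ y = y u * α + y w * β := by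
          intro y
          rw [dotProduct_comm]
          exact hdotx y
        exact this _
      rw [h2, h1, h1]
      have hAuu : A u u = 0 := by simp [hA]
      have hAww : A w w = 0 := by simp [hA]
      have hAuw : A u w = 0 := by simp [hA, hadj]
      have hAwu : A w u = 0 := by
        simp only [hA, SimpleGraph.adjMatrix_apply, ite_eq_right_iff]
        exact fun h => absurd (G.adj_symm h) hadj
      rw [hAuu, hAww, hAuw, hAwu]
      ring
    -- combine
    have hray : (0:ℝ) ≤ a * (x ⬝ᵥ x) := by
      have hle : ∑ i, c i * (lam i * c i) ≤ ∑ i, a * (c i * c i) := by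
        apply Finset.sum_le_sum
        intro i _
        by_cases hi : i = i0
        · subst hi; rw [hc0]; ring_nf; exact le_refl 0
        · nlinarith [hle_a i hi, sq_nonneg (c i), hge_b i]
      have h1 : (0:ℝ) ≤ ∑ i, a * (c i * c i) := by
        rw [← hAxz, hAx]; exact hle
      have h2 : ∑ i, a * (c i * c i) = a * (x ⬝ᵥ x) := by
        rw [hxx]; simp [dotProduct, Finset.mul_sum]
      rw [← h2]; exact h1
    have hxxpos : 0 < x ⬝ᵥ x := by
      have hxu : x u = α := by simp [hx, huw]
      have hxw : x w = β := by simp [hx, Ne.symm huw]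
      have : x ⬝ᵥ x = α ^ 2 + β ^ 2 := by
        rw [hdotx x, hxu, hxw]; ring
      rw [this]; exact hpos
    nlinarith [hray, hxxpos]
  -- the key quadratic inequality
  have hkey : (n : ℝ) * d + (n : ℝ) * (a * b) ≤ ((d : ℝ) - a) * ((d : ℝ) - b) := by
    have hexp : ∑ i, (lam i - a) * (lam i - b)
        = (n : ℝ) * d + (n : ℝ) * (a * b) - (a + b) * 0 := by
      rw [← hsum0, ← hsum2]
      rw [Finset.sum_congr rfl (fun i _ => by ring_nf :
        ∀ i ∈ Finset.univ, (lam i - a) * (lam i - b)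
          = lam i * lam i - (a + b) * lam i + a * b)]
      rw [Finset.sum_add_distrib, Finset.sum_sub_distrib, ← Finset.mul_sum,
        Finset.sum_const, Finset.card_univ, Fintype.card_fin, nsmul_eq_mul]
      ring
    have hbound : ∑ i, (lam i - a) * (lam i - b) ≤ ((d:ℝ) - a) * ((d:ℝ) - b) := by
      rw [← Finset.add_sum_erase Finset.univ _ (Finset.mem_univ i0)]
      have h1 : (lam i0 - a) * (lam i0 - b) ≤ ((d:ℝ) - a) * ((d:ℝ) - b) := by
        have ha' : a ≤ lam i0 := hle_0 i1
        have hb' : b ≤ lam i0 := hge_b i0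
        nlinarith [hPerron]
      have h2 : ∑ i ∈ Finset.univ.erase i0, (lam i - a) * (lam i - b) ≤ 0 := by
        apply Finset.sum_nonpos
        intro i hi
        have hi' : i ≠ i0 := (Finset.mem_erase.mp hi).1
        have h1 : lam i - a ≤ 0 := by linarith [hle_a i hi']
        have h2 : 0 ≤ lam i - b := by linarith [hge_b i]
        exact mul_nonpos_iff.mpr (Or.inr ⟨h1, h2⟩)
      linarith
    rw [hexp] at hbound
    linarith
  -- conclude
  have habs : |b| = -b := abs_of_nonpos hb0
  rw [habs]
  have hn' : (2:ℝ) ≤ n := by exact_mod_cast hn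
  have hd' : 2 * (d:ℝ) ≤ n := by exact_mod_cast hd
  have hd0 : (0:ℝ) ≤ d := Nat.cast_nonneg d
  nlinarith [hkey, mul_nonneg ha0 (neg_nonneg.mpr hb0), hd', hn', hd0,
    mul_nonneg hd0 (neg_nonneg.mpr hb0),
    mul_nonneg (mul_nonneg ha0 hd0) (neg_nonneg.mpr hb0),
    mul_nonneg (sub_nonneg.mpr hn') (neg_nonneg.mpr hb0),
    mul_nonneg (sub_nonneg.mpr hd') hd0,
    mul_nonneg (mul_nonneg (sub_nonneg.mpr hd') ha0) (neg_nonneg.mpr hb0)]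
end

section
/- Let G be a d-regular graph on n vertices with second largest adjacency eigenvalue λ₂. Then for every U ⊆ V(G), disc(U) ≤ (λ₂/2)·|U| + d. In particular, disc⁺(G) ≤ (λ₂/2)·n + d. -/
open Finset Matrix

lemma complete_aux {n : ℕ} (v : Fin n → Fin n → ℝ)
    (hortho : ∀ i j, v i ⬝ᵥ v j = if i = j then (1:ℝ) else 0) (j k : Fin n) :
    ∑ i, v i j * v i k = if j = k then (1:ℝ) else 0 := by
  classical
  set M : Matrix (Fin n) (Fin n) ℝ := Matrix.of v with hMdef
  have hM : M * Mᵀ = 1 := by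
    ext i j
    simpa [Matrix.mul_apply, Matrix.one_apply, dotProduct, hMdef] using hortho i j
  have hM' : Mᵀ * M = 1 := mul_eq_one_comm.mp hM
  have h2 := congrFun (congrFun hM' j) k
  simpa [Matrix.mul_apply, Matrix.one_apply, hMdef] using h2

lemma parseval_aux {n : ℕ} (v : Fin n → Fin n → ℝ)
    (hc : ∀ j k, ∑ i, v i j * v i k = if j = k then (1:ℝ) else 0)
    (x y : Fin n → ℝ) : ∑ i, (v i ⬝ᵥ x) * (v i ⬝ᵥ y) = x ⬝ᵥ y := by
  classical
  simp only [dotProduct]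
  calc ∑ i, (∑ j, v i j * x j) * (∑ k, v i k * y k)
      = ∑ i, ∑ j, ∑ k, (x j * y k) * (v i j * v i k) := by
        refine Finset.sum_congr rfl fun i _ => ?_
        rw [Finset.sum_mul_sum]
        exact Finset.sum_congr rfl fun j _ => Finset.sum_congr rfl fun k _ => by ring
    _ = ∑ j, ∑ k, (x j * y k) * ∑ i, v i j * v i k := by
        rw [Finset.sum_comm]
        refine Finset.sum_congr rfl fun j _ => ?_
        rw [Finset.sum_comm]
        refine Finset.sum_congr rfl fun k _ => ?_
        rw [Finset.mul_sum]
    _ = ∑ j, x j * y j := by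
        refine Finset.sum_congr rfl fun j _ => ?_
        simp only [hc, mul_ite, mul_one, mul_zero]
        simp

lemma star1_aux (nn d L u : ℝ) (hn : 2 ≤ nn) (hu0 : 0 ≤ u) (hun : u ≤ nn)
    (hd0 : 0 ≤ d) (hLlow : 0 ≤ d + (nn-1)*L) :
    (d-L)*(u*u)*(nn-1) ≤ 2*d*nn*(nn-1) + d*(u*(u-1))*nn := by
  have hn0 : (0:ℝ) ≤ nn := by linarith
  rcases le_or_gt 0 L with h | h
  · nlinarith [mul_nonneg (mul_nonneg h (mul_nonneg hu0 hu0)) (by linarith : (0:ℝ) ≤ nn-1),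
      mul_nonneg hd0 (sq_nonneg (nn-2*u)),
      mul_nonneg (mul_nonneg hd0 hn0) (by linarith : (0:ℝ) ≤ 7*nn-8)]
  · nlinarith [mul_nonneg hLlow (mul_nonneg hu0 hu0),
      mul_nonneg (mul_nonneg hd0 hn0) (by linarith : (0:ℝ) ≤ 2*nn-2-u)]

lemma star2_aux (nn d L u : ℝ) (hn : 2 ≤ nn) (hu0 : 0 ≤ u) (hun : u ≤ nn)
    (hd0 : 0 ≤ d) (hLlow : 0 ≤ d + (nn-1)*L) :
    L*(nn-1)*(u*nn - u*u - nn*nn) + d*u*(nn-u) ≤ 2*d*nn*(nn-1) := by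
  have hn0 : (0:ℝ) ≤ nn := by linarith
  have hneg : u*nn - u*u - nn*nn ≤ 0 := by nlinarith
  rcases le_or_gt 0 L with h | h
  · nlinarith [mul_nonpos_of_nonneg_of_nonpos (mul_nonneg h (by linarith : (0:ℝ) ≤ nn-1)) hneg,
      mul_nonneg hd0 (sq_nonneg (nn-2*u)),
      mul_nonneg (mul_nonneg hd0 hn0) (by linarith : (0:ℝ) ≤ 7*nn-8)]
  · nlinarith [mul_nonpos_of_nonneg_of_nonpos hLlow hneg,
      mul_nonneg (mul_nonneg hd0 hn0) (by linarith : (0:ℝ) ≤ nn-2)]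

lemma numeric_aux (nn d L u Q : ℝ) (hn : 2 ≤ nn) (hu0 : 0 ≤ u) (hun : u ≤ nn)
    (hd0 : 0 ≤ d) (hLlow : 0 ≤ d + (nn-1)*L)
    (hQ : Q ≤ L*(u - u/nn*u) + d*(u/nn*u)) :
    Q/2 - d/(nn-1) * (u*(u-1)/2) ≤ L/2*u + d ∧
    Q/2 - d/(nn-1) * (u*(u-1)/2) ≤ L/2*nn + d := by
  have hn0 : (0:ℝ) < nn := by linarith
  have hn1 : (0:ℝ) < nn - 1 := by linarith
  have hpos : (0:ℝ) < nn*(nn-1) := by positivity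
  have e1 : ((d - L) * (u/nn*u) - d/(nn-1)*(u*(u-1)) - 2*d) * (nn*(nn-1))
      = (d-L)*(u*u)*(nn-1) - (2*d*nn*(nn-1) + d*(u*(u-1))*nn) := by
    field_simp
    ring
  have s1 := star1_aux nn d L u hn hu0 hun hd0 hLlow
  have h1 : (d - L) * (u/nn*u) - d/(nn-1)*(u*(u-1)) - 2*d ≤ 0 := by
    by_contra hcon
    push_neg at hcon
    have := mul_pos hcon hpos
    rw [e1] at this
    linarith
  have e2 : (L*(u - u/nn*u) + d*(u/nn*u) - (L*nn + 2*d + d/(nn-1)*(u*(u-1)))) * (nn*(nn-1))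
      = L*(nn-1)*(u*nn - u*u - nn*nn) + d*u*(nn-u) - 2*d*nn*(nn-1) := by
    field_simp
    ring
  have s2 := star2_aux nn d L u hn hu0 hun hd0 hLlow
  have h2 : L*(u - u/nn*u) + d*(u/nn*u) - (L*nn + 2*d + d/(nn-1)*(u*(u-1))) ≤ 0 := by
    by_contra hcon
    push_neg at hcon
    have := mul_pos hcon hpos
    rw [e2] at this
    linarith
  constructor <;> linarith

/-- Number of edges of `G` inside `U`. -/
noncomputable def eIn {n : ℕ} (G : SimpleGraph (Fin n)) [DecidableRel G.Adj]
    (U : Finset (Fin n)) : ℝ :=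
  (∑ i ∈ U, ∑ j ∈ U, if G.Adj i j then (1 : ℝ) else 0) / 2

/-- Let `G` be a `d`-regular graph on `n` vertices with density `p = d/(n-1)` and second
largest adjacency eigenvalue `λ₂`. Then for every `U ⊆ V(G)`,
`disc(U) ≤ (λ₂/2)·|U| + d`; in particular `disc⁺(G) ≤ (λ₂/2)·n + d`. -/
theorem stmt3 {n d : ℕ} (hn : 2 ≤ n) (G : SimpleGraph (Fin n)) [DecidableRel G.Adj]
    (hreg : G.IsRegularOfDegree d)
    (v : Fin n → Fin n → ℝ) (lam : Fin n → ℝ)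
    (hortho : ∀ i j, v i ⬝ᵥ v j = if i = j then (1 : ℝ) else 0)
    (heig : ∀ i, (G.adjMatrix ℝ) *ᵥ v i = lam i • v i)
    (hsort : ∀ i j : Fin n, i ≤ j → lam j ≤ lam i) :
    (∀ U : Finset (Fin n),
      eIn G U - (d : ℝ) / ((n : ℝ) - 1) * (U.card.choose 2 : ℕ)
        ≤ lam ⟨1, by omega⟩ / 2 * U.card + d) ∧
    (⨆ U : Finset (Fin n), (eIn G U - (d : ℝ) / ((n : ℝ) - 1) * (U.card.choose 2 : ℕ)))
        ≤ lam ⟨1, by omega⟩ / 2 * n + d := by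
  classical
  set A := G.adjMatrix ℝ with hA
  have hc := complete_aux v hortho
  have hP := parseval_aux v hc
  -- basic matrix facts
  have hrow : ∀ i, ∑ j, A i j = (d:ℝ) := by
    intro i
    have h := SimpleGraph.adjMatrix_mulVec_const_apply_of_regular (α := ℝ) (a := 1) hreg (v := i)
    simp only [Matrix.mulVec, dotProduct, Function.const_apply, mul_one] at h
    rw [hA]; exact h
  have hAsymm : ∀ i j, A i j = A j i := by
    intro i j; simp [hA, SimpleGraph.adj_comm]
  have hA0 : ∀ i j, (0:ℝ) ≤ A i j := by
    intro i j; simp only [hA, SimpleGraph.adjMatrix_apply]; positivity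
  have hsymm : ∀ (w x : Fin n → ℝ), w ⬝ᵥ (A *ᵥ x) = (A *ᵥ w) ⬝ᵥ x := by
    intro w x
    rw [Matrix.dotProduct_mulVec]
    congr 1
    ext j
    simp [hA]
  have heigdot : ∀ i (x : Fin n → ℝ), v i ⬝ᵥ (A *ᵥ x) = lam i * (v i ⬝ᵥ x) := by
    intro i x
    rw [hsymm, heig i, smul_dotProduct, smul_eq_mul]
  have hnorm1 : ∀ i, v i ⬝ᵥ v i = 1 := by intro i; simpa using hortho i i
  have hexpand : ∀ x y : Fin n → ℝ, x ⬝ᵥ (A *ᵥ y) = ∑ i, ∑ j, A i j * (x i * y j) := by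
    intro x y
    simp only [dotProduct, Matrix.mulVec, Finset.mul_sum]
    exact Finset.sum_congr rfl fun i _ => Finset.sum_congr rfl fun j _ => by ring
  -- quadratic form bound : x A x ≤ d (x ⬝ x)
  have hQle : ∀ x : Fin n → ℝ, x ⬝ᵥ (A *ᵥ x) ≤ d * (x ⬝ᵥ x) := by
    intro x
    rw [hexpand x x]
    have step : ∑ i, ∑ j, A i j * (x i * x j)
        ≤ ∑ i, ∑ j, (A i j * (x i * x i) / 2 + A i j * (x j * x j) / 2) := by
      refine Finset.sum_le_sum fun i _ => Finset.sum_le_sum fun j _ => ?_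
      nlinarith [sq_nonneg (x i - x j), hA0 i j]
    have c1 : ∑ i, ∑ j, A i j * (x i * x i) / 2 = ∑ i, (d:ℝ) * (x i * x i) / 2 := by
      refine Finset.sum_congr rfl fun i _ => ?_
      rw [← Finset.sum_div, ← Finset.sum_mul, hrow i]
    have c2 : ∑ i, ∑ j, A i j * (x j * x j) / 2 = ∑ j, (d:ℝ) * (x j * x j) / 2 := by
      rw [Finset.sum_comm]
      refine Finset.sum_congr rfl fun j _ => ?_
      have : ∑ i, A i j = (d:ℝ) := by
        rw [Finset.sum_congr rfl fun i _ => hAsymm i j, hrow j]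
      rw [← Finset.sum_div, ← Finset.sum_mul, this]
    have hdx : d * (x ⬝ᵥ x) = ∑ i, ((d:ℝ) * (x i * x i) / 2 + (d:ℝ) * (x i * x i) / 2) := by
      simp only [dotProduct, Finset.mul_sum]
      exact Finset.sum_congr rfl fun i _ => by ring
    rw [hdx]
    calc ∑ i, ∑ j, A i j * (x i * x j)
        ≤ ∑ i, ∑ j, (A i j * (x i * x i) / 2 + A i j * (x j * x j) / 2) := step
      _ = ∑ i, ∑ j, A i j * (x i * x i) / 2 + ∑ i, ∑ j, A i j * (x j * x j) / 2 := by
          rw [← Finset.sum_add_distrib]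
          exact Finset.sum_congr rfl fun i _ => by rw [← Finset.sum_add_distrib]
      _ = ∑ i, ((d:ℝ) * (x i * x i) / 2 + (d:ℝ) * (x i * x i) / 2) := by
          rw [c1, c2, ← Finset.sum_add_distrib]
  have hlamle : ∀ i, lam i ≤ (d:ℝ) := by
    intro i
    have h := hQle (v i)
    have h2 : v i ⬝ᵥ (A *ᵥ v i) = lam i := by
      rw [heigdot i (v i), hnorm1 i, mul_one]
    rw [h2, hnorm1 i, mul_one] at h
    exact h
  have htrace : ∑ i, lam i = 0 := by
    have h1 : ∀ i, lam i = ∑ j, ∑ k, A j k * (v i j * v i k) := by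
      intro i
      have h := heigdot i (v i)
      rw [hnorm1 i, mul_one, hexpand] at h
      exact h.symm
    calc ∑ i, lam i = ∑ i, ∑ j, ∑ k, A j k * (v i j * v i k) :=
          Finset.sum_congr rfl fun i _ => h1 i
      _ = ∑ j, ∑ k, A j k * ∑ i, v i j * v i k := by
          rw [Finset.sum_comm]
          refine Finset.sum_congr rfl fun j _ => ?_
          rw [Finset.sum_comm]
          exact Finset.sum_congr rfl fun k _ => by rw [Finset.mul_sum]
      _ = ∑ j, A j j := by
          simp only [hc, mul_ite, mul_one, mul_zero]
          simp
      _ = 0 := by simp [hA]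
  -- distinguished indices
  set z : Fin n := ⟨0, by omega⟩ with hz
  set one' : Fin n := ⟨1, by omega⟩ with hone
  set L : ℝ := lam one' with hL
  have hle1 : ∀ i : Fin n, i ≠ z → lam i ≤ L := by
    intro i hi
    refine hsort one' i ?_
    rw [Fin.le_def]
    have : i.val ≠ 0 := fun h => hi (Fin.ext h)
    simp only [hone]
    omega
  set nn : ℝ := (n : ℝ) with hnn
  have hnn2 : (2:ℝ) ≤ nn := by rw [hnn]; exact_mod_cast hn
  have hd0 : (0:ℝ) ≤ (d:ℝ) := by positivity
  have hLlow : 0 ≤ (d:ℝ) + (nn - 1) * L := by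
    have h0 : lam z + ∑ i ∈ Finset.univ.erase z, lam i = 0 := by
      rw [Finset.add_sum_erase Finset.univ lam (Finset.mem_univ z)]
      exact htrace
    have h1 := Finset.sum_le_card_nsmul (Finset.univ.erase z) lam L
      (fun i hi => hle1 i (Finset.ne_of_mem_erase hi))
    rw [Finset.card_erase_of_mem (Finset.mem_univ z), Finset.card_univ, Fintype.card_fin,
      nsmul_eq_mul] at h1
    have hcast : ((n - 1 : ℕ) : ℝ) = nn - 1 := by
      rw [hnn, Nat.cast_sub (by omega : 1 ≤ n)]
      norm_num
    rw [hcast] at h1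
    have h2 := hlamle z
    linarith
  -- the per-U bound, in both forms
  have main : ∀ U : Finset (Fin n),
      eIn G U - (d : ℝ) / (nn - 1) * (U.card.choose 2 : ℕ) ≤ L / 2 * U.card + d ∧
      eIn G U - (d : ℝ) / (nn - 1) * (U.card.choose 2 : ℕ) ≤ L / 2 * nn + d := by
    intro U
    set x : Fin n → ℝ := fun i => if i ∈ U then 1 else 0 with hx
    set o : Fin n → ℝ := Function.const _ 1 with ho
    set u : ℝ := (U.card : ℝ) with hu
    set t : ℝ := u / nn with ht
    set c : Fin n → ℝ := fun i => v i ⬝ᵥ x with hcd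
    set a : Fin n → ℝ := fun i => v i ⬝ᵥ o with had
    set b : Fin n → ℝ := fun i => c i - t * a i with hbd
    have hu0 : (0:ℝ) ≤ u := by rw [hu]; positivity
    have hun : u ≤ nn := by
      rw [hu, hnn]
      have h : U.card ≤ n := by simpa using Finset.card_le_univ U
      exact_mod_cast h
    have hxx : x ⬝ᵥ x = u := by
      simp only [hx, dotProduct, mul_ite, mul_one, mul_zero, ite_self]
      simp [Finset.sum_ite_mem, hu]
    have hox : o ⬝ᵥ x = u := by
      simp only [ho, hx, dotProduct, Function.const_apply, one_mul]
      simp [Finset.sum_ite_mem, hu]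
    have hoo : o ⬝ᵥ o = nn := by
      simp [ho, dotProduct, hnn]
    have hc2 : ∑ i, c i * c i = u := by rw [← hxx]; exact hP x x
    have hac : ∑ i, a i * c i = u := by rw [← hox]; exact hP o x
    have ha2 : ∑ i, a i * a i = nn := by rw [← hoo]; exact hP o o
    have hda : ∀ i, lam i * a i = (d:ℝ) * a i := by
      intro i
      have h1 := heigdot i o
      have h2 : A *ᵥ o = fun _ => (d:ℝ) := by
        ext j
        rw [hA, ho]
        rw [SimpleGraph.adjMatrix_mulVec_const_apply_of_regular hreg]
        rw [mul_one]
      rw [h2] at h1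
      have h3 : v i ⬝ᵥ (fun _ => (d:ℝ)) = (d:ℝ) * a i := by
        simp only [dotProduct, had, ho, Function.const_apply, mul_one, Finset.mul_sum]
        exact Finset.sum_congr rfl fun j _ => by ring
      rw [h3] at h1
      exact h1.symm
    have htn : t * nn = u := by
      rw [ht]
      field_simp
    have hcb : ∀ i, c i = b i + t * a i := fun i => by rw [hbd]; ring
    have hab : ∑ i, a i * b i = 0 := by
      have e : ∀ i, a i * b i = a i * c i - t * (a i * a i) := fun i => by rw [hbd]; ring
      rw [Finset.sum_congr rfl fun i _ => e i, Finset.sum_sub_distrib, ← Finset.mul_sum,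
        hac, ha2, htn, sub_self]
    have hb2 : ∑ i, b i * b i = u - t * u := by
      have e : ∀ i, b i * b i = c i * c i - 2 * t * (a i * c i) + t * (t * (a i * a i)) :=
        fun i => by rw [hbd]; ring
      rw [Finset.sum_congr rfl fun i _ => e i]
      rw [Finset.sum_add_distrib, Finset.sum_sub_distrib, ← Finset.mul_sum, ← Finset.mul_sum,
        ← Finset.mul_sum, hc2, hac, ha2]
      linear_combination t * htn
    have hQsplit : ∑ i, lam i * (c i * c i) = ∑ i, lam i * (b i * b i) + (d:ℝ) * (t * u) := by
      have point : ∀ i, lam i * (c i * c i)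
          = lam i * (b i * b i) + 2 * t * (((d:ℝ)) * (a i * b i))
            + t * t * ((d:ℝ) * (a i * a i)) := by
        intro i
        rw [hcb i]
        linear_combination (2 * t * b i + t * t * a i) * (hda i)
      rw [Finset.sum_congr rfl fun i _ => point i]
      rw [Finset.sum_add_distrib, Finset.sum_add_distrib, ← Finset.mul_sum, ← Finset.mul_sum,
        ← Finset.mul_sum, ← Finset.mul_sum, hab, ha2]
      linear_combination ((d:ℝ) * t) * htn
    have key : ∑ i, (lam i - L) * (b i * b i) ≤ 0 := by
      rw [← Finset.add_sum_erase Finset.univ _ (Finset.mem_univ z)]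
      have hrest : ∑ i ∈ Finset.univ.erase z, (lam i - L) * (b i * b i) ≤ 0 := by
        refine Finset.sum_nonpos fun i hi => ?_
        have := hle1 i (Finset.ne_of_mem_erase hi)
        exact mul_nonpos_of_nonpos_of_nonneg (by linarith) (mul_self_nonneg _)
      have hzterm : (lam z - L) * (b z * b z) ≤ 0 := by
        rcases le_or_gt (d:ℝ) L with hcase | hcase
        · exact mul_nonpos_of_nonpos_of_nonneg (by linarith [hlamle z]) (mul_self_nonneg _)
        · have hai : ∀ i, i ≠ z → a i = 0 := by
            intro i hi
            have hlt : lam i < (d:ℝ) := lt_of_le_of_lt (hle1 i hi) hcase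
            have h0 : (lam i - (d:ℝ)) * a i = 0 := by linear_combination hda i
            rcases mul_eq_zero.mp h0 with h | h
            · exact absurd h (sub_ne_zero_of_ne (ne_of_lt hlt))
            · exact h
          have haz : a z * a z = nn := by
            rw [← ha2, ← Finset.add_sum_erase Finset.univ _ (Finset.mem_univ z)]
            rw [Finset.sum_eq_zero fun i hi => by
              rw [hai i (Finset.ne_of_mem_erase hi), zero_mul], add_zero]
          have hazne : a z ≠ 0 := by
            intro h
            rw [h, mul_zero] at haz
            linarith
          have habz : a z * b z = 0 := by
            have h := hab
            rw [← Finset.add_sum_erase Finset.univ (fun i => a i * b i) (Finset.mem_univ z),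
              Finset.sum_eq_zero fun i hi => by
                rw [hai i (Finset.ne_of_mem_erase hi), zero_mul], add_zero] at h
            exact h
          have hbz : b z = 0 := (mul_eq_zero.mp habz).resolve_left hazne
          rw [hbz]
          simp
      linarith
    have hmain : ∑ i, lam i * (b i * b i) ≤ L * (u - t * u) := by
      have expand : ∑ i, lam i * (b i * b i)
          = ∑ i, (lam i - L) * (b i * b i) + L * ∑ i, (b i * b i) := by
        rw [Finset.mul_sum, ← Finset.sum_add_distrib]
        exact Finset.sum_congr rfl fun i _ => by ring
      rw [expand, hb2]
      linarith
    -- quadratic form equals sum over eigenvalues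
    have hQform : x ⬝ᵥ (A *ᵥ x) = ∑ i, lam i * (c i * c i) := by
      rw [← hP x (A *ᵥ x)]
      refine Finset.sum_congr rfl fun i _ => ?_
      rw [heigdot]
      simp only [hcd]
      ring
    have hQbound : x ⬝ᵥ (A *ᵥ x) ≤ L * (u - u / nn * u) + (d:ℝ) * (u / nn * u) := by
      rw [hQform, hQsplit, ← ht]
      linarith
    -- eIn in terms of the quadratic form
    have heIn : eIn G U = (x ⬝ᵥ (A *ᵥ x)) / 2 := by
      rw [eIn]
      congr 1
      have conv1 : ∀ (f : Fin n → ℝ), ∑ i, (if i ∈ U then (1:ℝ) else 0) * f i = ∑ i ∈ U, f i := by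
        intro f
        rw [Finset.sum_congr rfl fun i _ =>
          (by split <;> simp : (if i ∈ U then (1:ℝ) else 0) * f i = if i ∈ U then f i else 0)]
        rw [Finset.sum_ite_mem, Finset.univ_inter]
      have e1 : x ⬝ᵥ (A *ᵥ x) = ∑ i, x i * ∑ j, A i j * x j := by
        simp only [dotProduct, Matrix.mulVec]
      rw [e1]
      simp only [hx]
      rw [conv1 (fun i => ∑ j, A i j * (if j ∈ U then (1:ℝ) else 0))]
      refine (Finset.sum_congr rfl fun i _ => ?_).symm
      have conv2 : ∑ j, A i j * (if j ∈ U then (1:ℝ) else 0) = ∑ j ∈ U, A i j := by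
        rw [Finset.sum_congr rfl fun j _ =>
          (by split <;> simp : A i j * (if j ∈ U then (1:ℝ) else 0) = if j ∈ U then A i j else 0)]
        rw [Finset.sum_ite_mem, Finset.univ_inter]
      rw [conv2]
      refine Finset.sum_congr rfl fun j _ => ?_
      rw [hA]
      simp
    have hchoose : ((U.card.choose 2 : ℕ) : ℝ) = u * (u - 1) / 2 := by
      rw [Nat.cast_choose_two, hu]
    have hnum := numeric_aux nn (d:ℝ) L u (x ⬝ᵥ (A *ᵥ x)) hnn2 hu0 hun hd0 hLlow hQbound
    rw [heIn, hchoose]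
    exact hnum
  constructor
  · intro U
    exact (main U).1
  · exact ciSup_le fun U => (main U).2
end

section
/- If β ∈ [0, π/2] and t = cos(π/2 − β) satisfies t ≤ 0.5, then 0 ≤ t ≤ β ≤ t + t². -/
/-- If `β ∈ [0, π/2]` and `t = cos(π/2 − β)` satisfies `t ≤ 0.5`, then
`0 ≤ t ≤ β ≤ t + t²`. -/
theorem stmt6 (β t : ℝ) (hβ : β ∈ Set.Icc 0 (Real.pi / 2))
    (ht : t = Real.cos (Real.pi / 2 - β)) (ht5 : t ≤ 0.5) :
    0 ≤ t ∧ t ≤ β ∧ β ≤ t + t ^ 2 := by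
  obtain ⟨hβ0, hβ2⟩ := hβ
  rw [Real.cos_pi_div_two_sub] at ht
  subst ht
  have hpi : Real.pi ≤ 4 := Real.pi_le_four
  have hsin_nonneg : 0 ≤ Real.sin β :=
    Real.sin_nonneg_of_nonneg_of_le_pi hβ0 (by linarith)
  have hsin_le : Real.sin β ≤ β := Real.sin_le hβ0
  refine ⟨hsin_nonneg, hsin_le, ?_⟩
  -- β ≤ π/6 since sin β ≤ 1/2 = sin(π/6)
  have hβ6 : β ≤ Real.pi / 6 := by
    by_contra h
    push_neg at h
    have : Real.sin (Real.pi / 6) < Real.sin β :=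
      Real.sin_lt_sin_of_lt_of_le_pi_div_two (by linarith [Real.pi_pos]) hβ2 h
    rw [Real.sin_pi_div_six] at this
    norm_num at ht5
    linarith
  have hβ1 : β ≤ 1 := by
    have := Real.pi_le_four
    linarith
  rcases eq_or_lt_of_le hβ0 with h0 | h0
  · simp [← h0]
  · have hcube : β - β ^ 3 / 4 < Real.sin β := by
      have := Real.sin_gt_sub_cube h0
      linarith [pow_pos h0 3]
    nlinarith [sq_nonneg β, sq_nonneg (Real.sin β), hsin_nonneg, hsin_le,
      pow_le_pow_left₀ hβ0 hβ6 3, Real.pi_le_four, sq_nonneg (β - Real.sin β)]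
end

section
/- For every graph G, disc⁺₁(G) ≤ 4·disc⁺(G), where disc⁺₁(G) is the maximum of disc(x) over x ∈ {-1,1}ⁿ. -/
open Finset

/-- Edge density `p = m / C(n,2)`. -/
noncomputable def density {n : ℕ} (G : SimpleGraph (Fin n)) [DecidableRel G.Adj] : ℝ :=
  (G.edgeFinset.card : ℝ) / (n.choose 2)

/-- `disc(x) = (1/2)·Σ_{i∼j} x(i)x(j) − (p/2)·Σ_{i≠j} x(i)x(j)`, over ordered pairs. -/
noncomputable def discVec {n : ℕ} (G : SimpleGraph (Fin n)) [DecidableRel G.Adj]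
    (x : Fin n → ℝ) : ℝ :=
  (1 / 2) * (∑ i, ∑ j, if G.Adj i j then x i * x j else 0)
    - density G / 2 * (∑ i, ∑ j, if i ≠ j then x i * x j else 0)

/-- `disc⁺(G) = max_{U ⊆ V(G)} e(U) − p·C(|U|,2)`. -/
noncomputable def discPlus {n : ℕ} (G : SimpleGraph (Fin n)) [DecidableRel G.Adj] : ℝ :=
  ⨆ U : Finset (Fin n), (eIn G U - density G * (U.card.choose 2 : ℕ))

section aux

variable {n : ℕ}

lemma filter_double_sum (c : Fin n → Fin n → ℝ) (p : Fin n → Prop) [DecidablePred p] :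
    (∑ i ∈ univ.filter p, ∑ j ∈ univ.filter p, c i j)
      = ∑ i, ∑ j, (if p i then (1:ℝ) else 0) * (if p j then (1:ℝ) else 0) * c i j := by
  rw [Finset.sum_filter]
  refine Finset.sum_congr rfl fun i _ => ?_
  rw [Finset.sum_filter]
  by_cases hp : p i <;> simp [hp, ite_mul]

lemma split_sum (x : Fin n → ℝ) (hx : ∀ i, x i = 1 ∨ x i = -1) (c : Fin n → Fin n → ℝ) :
    (∑ i, ∑ j, x i * x j * c i j)
      = 2 * ((∑ i ∈ univ.filter (fun i => x i = 1), ∑ j ∈ univ.filter (fun j => x j = 1), c i j)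
          + (∑ i ∈ univ.filter (fun i => x i = -1), ∑ j ∈ univ.filter (fun j => x j = -1), c i j))
        - ∑ i, ∑ j, c i j := by
  rw [filter_double_sum, filter_double_sum]
  have key : ∀ i j, x i * x j * c i j
      = 2 * (((if x i = 1 then (1:ℝ) else 0) * (if x j = 1 then (1:ℝ) else 0)) * c i j
           + ((if x i = -1 then (1:ℝ) else 0) * (if x j = -1 then (1:ℝ) else 0)) * c i j)
        - c i j := by
    intro i j
    rcases hx i with hi | hi <;> rcases hx j with hj | hj <;> rw [hi, hj] <;> norm_num <;> ring
  calc (∑ i, ∑ j, x i * x j * c i j)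
      = ∑ i, ∑ j, (2 * (((if x i = 1 then (1:ℝ) else 0) * (if x j = 1 then (1:ℝ) else 0)) * c i j
           + ((if x i = -1 then (1:ℝ) else 0) * (if x j = -1 then (1:ℝ) else 0)) * c i j)
        - c i j) := Finset.sum_congr rfl fun i _ => Finset.sum_congr rfl fun j _ => key i j
    _ = _ := by
        simp only [Finset.sum_sub_distrib, Finset.sum_add_distrib, Finset.mul_sum, mul_add]

variable (G : SimpleGraph (Fin n)) [DecidableRel G.Adj]

lemma T_count (V : Finset (Fin n)) :
    (∑ i ∈ V, ∑ j ∈ V, if i ≠ j then (1:ℝ) else 0) = 2 * (V.card.choose 2 : ℕ) := by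
  have h : ∀ i ∈ V, (∑ j ∈ V, if i ≠ j then (1:ℝ) else 0) = (V.card : ℝ) - 1 := by
    intro i hi
    have : ∀ j, (if i ≠ j then (1:ℝ) else 0) = 1 - (if i = j then (1:ℝ) else 0) := by
      intro j; by_cases h : i = j <;> simp [h]
    rw [Finset.sum_congr rfl fun j _ => this j, Finset.sum_sub_distrib, Finset.sum_const,
      Finset.sum_ite_eq V i (fun _ => (1:ℝ)), if_pos hi]
    simp
  rw [Finset.sum_congr rfl h, Finset.sum_const, Nat.cast_choose_two]
  ring

lemma eIn_univ : eIn G univ = (G.edgeFinset.card : ℝ) := by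
  have h : ∀ i : Fin n, (∑ j, if G.Adj i j then (1:ℝ) else 0) = (G.degree i : ℝ) := by
    intro i
    rw [Finset.sum_boole]
    rw [SimpleGraph.degree, SimpleGraph.neighborFinset_eq_filter]
  rw [eIn, Finset.sum_congr rfl fun i _ => h i, ← Nat.cast_sum,
    SimpleGraph.sum_degrees_eq_twice_card_edges]
  push_cast; ring

lemma zero_term : eIn G univ - density G * (n.choose 2 : ℕ) = 0 := by
  rw [eIn_univ, density]
  by_cases hc : (n.choose 2 : ℝ) = 0
  · have hn : n < 2 := by
      by_contra h
      push_neg at h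
      have := Nat.choose_pos (n := n) (k := 2) h
      exact absurd hc (by positivity)
    have hsub : Subsingleton (Fin n) := by
      interval_cases n <;> infer_instance
    have hbot : G = ⊥ := by
      ext i j
      simp only [SimpleGraph.bot_adj, iff_false]
      intro h
      exact G.ne_of_adj h (Subsingleton.elim i j)
    subst hbot
    rw [hc, mul_zero, sub_zero]; simp [SimpleGraph.edgeFinset_eq_empty]
  · field_simp; simp

end aux

/-- For every graph `G`, `disc⁺₁(G) ≤ 4·disc⁺(G)`, where `disc⁺₁(G)` is the maximum of
`disc(x)` over `x ∈ {−1,1}ⁿ`. -/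
theorem stmt7 {n : ℕ} (G : SimpleGraph (Fin n)) [DecidableRel G.Adj] :
    (⨆ x : {x : Fin n → ℝ // ∀ i, x i = 1 ∨ x i = -1}, discVec G x.1)
      ≤ 4 * discPlus G := by
  have hne : Nonempty {x : Fin n → ℝ // ∀ i, x i = 1 ∨ x i = -1} :=
    ⟨⟨fun _ => 1, fun _ => Or.inl rfl⟩⟩
  apply ciSup_le
  rintro ⟨x, hx⟩
  set U := univ.filter (fun i => x i = 1) with hUdef
  set W := univ.filter (fun i => x i = -1) with hWdef
  have hA : (∑ i, ∑ j, if G.Adj i j then x i * x j else 0)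
      = ∑ i, ∑ j, x i * x j * (if G.Adj i j then (1:ℝ) else 0) := by
    refine Finset.sum_congr rfl fun i _ => Finset.sum_congr rfl fun j _ => ?_
    by_cases h : G.Adj i j <;> simp [h]
  have hB : (∑ i, ∑ j, if i ≠ j then x i * x j else 0)
      = ∑ i, ∑ j, x i * x j * (if i ≠ j then (1:ℝ) else 0) := by
    refine Finset.sum_congr rfl fun i _ => Finset.sum_congr rfl fun j _ => ?_
    by_cases h : i ≠ j <;> simp [h]
  have hSU : ∀ V : Finset (Fin n),
      (∑ i ∈ V, ∑ j ∈ V, if G.Adj i j then (1:ℝ) else 0) = 2 * eIn G V := by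
    intro V; rw [eIn]; ring
  have he0 : eIn G univ = density G * (n.choose 2 : ℕ) := by
    have := zero_term G; linarith
  have hdisc : discVec G x
      = 2 * (eIn G U - density G * (U.card.choose 2 : ℕ))
        + 2 * (eIn G W - density G * (W.card.choose 2 : ℕ)) := by
    rw [discVec, hA, hB, split_sum x hx, split_sum x hx, ← hUdef, ← hWdef,
      hSU U, hSU W, hSU univ, T_count U, T_count W, T_count univ, card_univ,
      Fintype.card_fin, he0]
    ring
  have hbd : BddAbove (Set.range fun V : Finset (Fin n) =>
      eIn G V - density G * (V.card.choose 2 : ℕ)) :=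
    Set.Finite.bddAbove (Set.finite_range _)
  have h1 : eIn G U - density G * (U.card.choose 2 : ℕ) ≤ discPlus G := le_ciSup hbd U
  have h2 : eIn G W - density G * (W.card.choose 2 : ℕ) ≤ discPlus G := le_ciSup hbd W
  rw [hdisc]
  linarith
end

section
/- Let G be a graph on n vertices with average degree d, adjacency matrix A, eigenvalues λ₁ ≥ ... ≥ λₙ, and let K be the largest index with λ_K > 0. Then SDP(G) ≥ Σ_{i=2}^{K} λᵢ, where SDP(G) is the maximum of ⟨X, A − (d/n)J⟩ over symmetric positive semidefinite matrices X with all diagonal entries at most 1. -/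
open Finset Matrix

/-- The semidefinite relaxation
`SDP(G) = max { ⟨X, A − (d/n)J⟩ : X symmetric, X ⪰ 0, Xᵢᵢ ≤ 1 }`,
where `d` is the average degree of `G`. -/
noncomputable def SDP {n : ℕ} (G : SimpleGraph (Fin n)) [DecidableRel G.Adj] : ℝ :=
  sSup {x : ℝ | ∃ X : Matrix (Fin n) (Fin n) ℝ, X.IsSymm ∧ X.PosSemidef ∧
    (∀ i, X i i ≤ 1) ∧
    x = ∑ i, ∑ j, X i j * ((G.adjMatrix ℝ) i j - ((∑ k, (G.degree k : ℝ)) / n) / n)}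


lemma col_ortho {n : ℕ} (v : Fin n → Fin n → ℝ)
    (hortho : ∀ i j, v i ⬝ᵥ v j = if i = j then (1 : ℝ) else 0) :
    ∀ i j, (∑ k, v k i * v k j) = if i = j then (1 : ℝ) else 0 := by
  have h1 : (Matrix.of v) * (Matrix.of v)ᵀ = 1 := by
    ext i j
    simpa [Matrix.mul_apply, dotProduct, Matrix.one_apply] using hortho i j
  have h2 : (Matrix.of v)ᵀ * (Matrix.of v) = 1 := mul_eq_one_comm.mp h1
  intro i j
  have := congrFun (congrFun h2 i) j
  simpa [Matrix.mul_apply, Matrix.one_apply] using this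

/-- Construct a feasible matrix from an orthonormal eigensystem: for any set `T'` of
eigenvector indices and coefficients `b` with `∑ b² ≤ 1`, the matrix
`X = ∑_{k∈T'} vₖvₖᵀ − w wᵀ` with `w = ∑ bₖ vₖ` is feasible, with an explicit objective value. -/
lemma sdp_feasible {n : ℕ} (G : SimpleGraph (Fin n)) [DecidableRel G.Adj]
    (v : Fin n → Fin n → ℝ) (lam : Fin n → ℝ)
    (hortho : ∀ i j, v i ⬝ᵥ v j = if i = j then (1 : ℝ) else 0)
    (heig : ∀ i, (G.adjMatrix ℝ) *ᵥ v i = lam i • v i)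
    (T' : Finset (Fin n)) (b : Fin n → ℝ) (hb : ∑ k ∈ T', (b k)^2 ≤ 1) :
    ∃ X : Matrix (Fin n) (Fin n) ℝ, X.IsSymm ∧ X.PosSemidef ∧ (∀ i, X i i ≤ 1) ∧
      ∑ i, ∑ j, X i j * ((G.adjMatrix ℝ) i j - ((∑ k, (G.degree k : ℝ)) / n) / n)
        = (∑ k ∈ T', lam k - ∑ k ∈ T', lam k * (b k)^2)
          - (((∑ k, (G.degree k : ℝ)) / n) / n) *
            ((∑ k ∈ T', (∑ j, v k j)^2) - (∑ k ∈ T', b k * (∑ j, v k j))^2) := by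
  classical
  set A := G.adjMatrix ℝ with hA
  set D := ((∑ k, (G.degree k : ℝ)) / n) / n with hD
  have hcol := col_ortho v hortho
  have hAv : ∀ k i, (∑ j, A i j * v k j) = lam k * v k i := by
    intro k i
    have := congrFun (heig k) i
    simpa [Matrix.mulVec, dotProduct] using this
  set w : Fin n → ℝ := fun i => ∑ k ∈ T', b k * v k i with hw
  set X : Matrix (Fin n) (Fin n) ℝ :=
    Matrix.of (fun i j => (∑ k ∈ T', v k i * v k j) - w i * w j) with hX
  -- w dotted against anything
  have hdotw : ∀ (x : Fin n → ℝ), (∑ i, x i * w i) = ∑ k ∈ T', b k * (∑ i, x i * v k i) := by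
    intro x
    simp only [hw, Finset.mul_sum]
    rw [Finset.sum_comm]
    refine Finset.sum_congr rfl fun k _ => Finset.sum_congr rfl fun i _ => by ring
  -- symmetry
  have hsymm : X.IsSymm := by
    ext i j
    simp only [Matrix.transpose_apply, hX, Matrix.of_apply]
    rw [mul_comm (w j) (w i)]
    congr 1
    exact Finset.sum_congr rfl fun k _ => mul_comm _ _
  -- quadratic form
  have hquad : ∀ x : Fin n → ℝ, x ⬝ᵥ (X *ᵥ x)
      = (∑ k ∈ T', (∑ i, x i * v k i)^2) - (∑ k ∈ T', b k * (∑ i, x i * v k i))^2 := by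
    intro x
    have hXv : ∀ i, (X *ᵥ x) i
        = (∑ k ∈ T', v k i * (∑ j, x j * v k j)) - w i * (∑ j, x j * w j) := by
      intro i
      simp only [Matrix.mulVec, dotProduct, hX, Matrix.of_apply, sub_mul,
        Finset.sum_sub_distrib, Finset.sum_mul, Finset.mul_sum]
      congr 1
      · rw [Finset.sum_comm]
        exact Finset.sum_congr rfl fun k _ => Finset.sum_congr rfl fun j _ => by ring
      · exact Finset.sum_congr rfl fun j _ => by ring
    calc x ⬝ᵥ (X *ᵥ x) = ∑ i, x i *
          ((∑ k ∈ T', v k i * (∑ j, x j * v k j)) - w i * (∑ j, x j * w j)) := by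
            exact Finset.sum_congr rfl fun i _ => by rw [hXv i]
      _ = (∑ k ∈ T', (∑ i, x i * v k i) * (∑ j, x j * v k j))
          - (∑ i, x i * w i) * (∑ j, x j * w j) := by
            simp only [mul_sub, Finset.sum_sub_distrib, Finset.mul_sum, Finset.sum_mul]
            congr 1
            · rw [Finset.sum_comm]
              exact Finset.sum_congr rfl fun k _ => Finset.sum_congr rfl fun i _ =>
                Finset.sum_congr rfl fun j _ => by ring
            · exact Finset.sum_congr rfl fun i _ =>
                Finset.sum_congr rfl fun j _ => by ring
      _ = (∑ k ∈ T', (∑ i, x i * v k i)^2) - (∑ k ∈ T', b k * (∑ i, x i * v k i))^2 := by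
            rw [hdotw x]
            congr 1
            · exact Finset.sum_congr rfl fun k _ => (sq _).symm
            · rw [sq]
  -- PSD
  have hpsd : X.PosSemidef := by
    rw [Matrix.posSemidef_iff_dotProduct_mulVec]
    constructor
    · rw [Matrix.IsHermitian, Matrix.conjTranspose_eq_transpose_of_trivial]
      exact hsymm
    · intro x
      have hcs := Finset.sum_mul_sq_le_sq_mul_sq T' b (fun k => ∑ i, x i * v k i)
      have hsq : (0:ℝ) ≤ ∑ k ∈ T', (∑ i, x i * v k i)^2 :=
        Finset.sum_nonneg fun k _ => sq_nonneg _
      have : (∑ k ∈ T', b k * (∑ i, x i * v k i))^2 ≤ ∑ k ∈ T', (∑ i, x i * v k i)^2 :=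
        hcs.trans (by nlinarith)
      have hx : x ⬝ᵥ (X *ᵥ x) = star x ⬝ᵥ (X *ᵥ x) := by simp
      rw [← hx, hquad x]
      linarith
  -- diagonal
  have hdiag : ∀ i, X i i ≤ 1 := by
    intro i
    have h1 : X i i ≤ ∑ k ∈ T', v k i * v k i := by
      simp only [hX, Matrix.of_apply]
      nlinarith [sq_nonneg (w i)]
    have h2 : (∑ k ∈ T', v k i * v k i) ≤ ∑ k, v k i * v k i :=
      Finset.sum_le_sum_of_subset_of_nonneg (Finset.subset_univ _)
        (fun k _ _ => mul_self_nonneg _)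
    have h3 := hcol i i
    simp only [if_true, eq_self_iff_true] at h3
    linarith
  -- objective value
  refine ⟨X, hsymm, hpsd, hdiag, ?_⟩
  -- split the bilinear form along the rank-one pieces
  have hsplit : ∀ B : Matrix (Fin n) (Fin n) ℝ,
      ∑ i, ∑ j, X i j * B i j
        = (∑ k ∈ T', ∑ i, v k i * (∑ j, B i j * v k j)) - ∑ i, w i * (∑ j, B i j * w j) := by
    intro B
    simp only [hX, Matrix.of_apply, sub_mul, Finset.sum_sub_distrib, Finset.sum_mul,
      Finset.mul_sum]
    congr 1
    · have h1 : ∀ i : Fin n, (∑ j, ∑ k ∈ T', v k i * v k j * B i j)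
          = ∑ k ∈ T', ∑ j, v k i * v k j * B i j := fun i => Finset.sum_comm
      rw [Finset.sum_congr rfl fun i _ => h1 i, Finset.sum_comm]
      refine Finset.sum_congr rfl fun k _ => ?_
      refine Finset.sum_congr rfl fun i _ => ?_
      refine Finset.sum_congr rfl fun j _ => by ring
    · refine Finset.sum_congr rfl fun i _ => ?_
      refine Finset.sum_congr rfl fun j _ => by ring
  have hsplit' := hsplit (Matrix.of fun i j => A i j - D)
  have hrow : ∀ x : Fin n → ℝ, ∀ i,
      (∑ j, (A i j - D) * x j) = (∑ j, A i j * x j) - D * ∑ j, x j := by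
    intro x i
    rw [Finset.mul_sum, ← Finset.sum_sub_distrib]
    exact Finset.sum_congr rfl fun j _ => by ring
  have hvv : ∀ k, (∑ i, v k i * v k i) = 1 := by
    intro k
    have := hortho k k
    simpa [dotProduct] using this
  -- value on eigenvectors
  have hqv : ∀ k, (∑ i, v k i * (∑ j, (A i j - D) * v k j))
      = lam k - D * (∑ j, v k j)^2 := by
    intro k
    have : ∀ i, v k i * (∑ j, (A i j - D) * v k j)
        = v k i * (lam k * v k i) - v k i * (D * ∑ j, v k j) := by
      intro i
      rw [hrow (v k) i, hAv k i]
      ring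
    rw [Finset.sum_congr rfl fun i _ => this i, Finset.sum_sub_distrib]
    have e1 : (∑ i, v k i * (lam k * v k i)) = lam k := by
      rw [show (∑ i, v k i * (lam k * v k i)) = lam k * ∑ i, v k i * v k i from by
        rw [Finset.mul_sum]; exact Finset.sum_congr rfl fun i _ => by ring, hvv k, mul_one]
    have e2 : (∑ i, v k i * (D * ∑ j, v k j)) = D * (∑ j, v k j)^2 := by
      rw [← Finset.sum_mul]
      ring
    rw [e1, e2]
  -- value on w
  have hAw : ∀ i, (∑ j, A i j * w j) = ∑ k ∈ T', b k * (lam k * v k i) := by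
    intro i
    simp only [hw, Finset.mul_sum]
    rw [Finset.sum_comm]
    refine Finset.sum_congr rfl fun k _ => ?_
    rw [show (∑ j, A i j * (b k * v k j)) = b k * ∑ j, A i j * v k j from by
      rw [Finset.mul_sum]; exact Finset.sum_congr rfl fun j _ => by ring, hAv k i]
  have hwv : ∀ k ∈ T', (∑ i, w i * v k i) = b k := by
    intro k hk
    have h1 : (∑ i, w i * v k i) = ∑ i, v k i * w i :=
      Finset.sum_congr rfl fun i _ => mul_comm _ _
    rw [h1, hdotw (v k)]
    have h2 : ∀ l ∈ T', b l * (∑ i, v k i * v l i) = if k = l then b l else 0 := by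
      intro l _
      have := hortho k l
      simp only [dotProduct] at this
      rw [this]
      split <;> simp
    rw [Finset.sum_congr rfl h2, Finset.sum_ite_eq T' k b, if_pos hk]
  have hqw : (∑ i, w i * (∑ j, (A i j - D) * w j))
      = (∑ k ∈ T', lam k * (b k)^2) - D * (∑ k ∈ T', b k * (∑ j, v k j))^2 := by
    have e0 : ∀ i, w i * (∑ j, (A i j - D) * w j)
        = w i * (∑ k ∈ T', b k * (lam k * v k i)) - w i * (D * ∑ j, w j) := by
      intro i
      rw [hrow w i, hAw i]
      ring
    rw [Finset.sum_congr rfl fun i _ => e0 i, Finset.sum_sub_distrib]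
    have e1 : (∑ i, w i * (∑ k ∈ T', b k * (lam k * v k i)))
        = ∑ k ∈ T', lam k * (b k)^2 := by
      have : ∀ i, w i * (∑ k ∈ T', b k * (lam k * v k i))
          = ∑ k ∈ T', b k * lam k * (w i * v k i) := by
        intro i
        rw [Finset.mul_sum]
        exact Finset.sum_congr rfl fun k _ => by ring
      rw [Finset.sum_congr rfl fun i _ => this i, Finset.sum_comm]
      refine Finset.sum_congr rfl fun k hk => ?_
      rw [← Finset.mul_sum, hwv k hk]
      ring
    have e2 : (∑ i, w i * (D * ∑ j, w j)) = D * (∑ k ∈ T', b k * (∑ j, v k j))^2 := by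
      rw [← Finset.sum_mul]
      have hsw : (∑ i, w i) = ∑ k ∈ T', b k * (∑ j, v k j) := by
        have := hdotw (fun _ => (1:ℝ))
        simpa using this
      rw [hsw]
      ring
    rw [e1, e2]
  have hof : ∀ i j, (Matrix.of fun i j => A i j - D) i j = A i j - D := fun i j => rfl
  simp only [hof] at hsplit'
  rw [hsplit', Finset.sum_congr rfl fun k _ => hqv k, hqw, Finset.sum_sub_distrib,
    ← Finset.mul_sum]
  ring


lemma sdp_bddAbove {n : ℕ} (G : SimpleGraph (Fin n)) [DecidableRel G.Adj] :
    BddAbove {x : ℝ | ∃ X : Matrix (Fin n) (Fin n) ℝ, X.IsSymm ∧ X.PosSemidef ∧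
      (∀ i, X i i ≤ 1) ∧
      x = ∑ i, ∑ j, X i j * ((G.adjMatrix ℝ) i j - ((∑ k, (G.degree k : ℝ)) / n) / n)} := by
  classical
  set D := ((∑ k, (G.degree k : ℝ)) / n) / n with hD
  refine ⟨∑ i, ∑ j, |(G.adjMatrix ℝ) i j - D|, ?_⟩
  rintro x ⟨X, hsym, hpsd, hdiag, rfl⟩
  have hentry : ∀ i j, |X i j| ≤ 1 := by
    intro i j
    have hq : ∀ y : Fin n → ℝ, 0 ≤ y ⬝ᵥ (X *ᵥ y) := by
      intro y
      have := hpsd.dotProduct_mulVec_nonneg y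
      simpa using this
    have hsym' : X j i = X i j := by
      have := congrFun (congrFun hsym i) j
      simpa [Matrix.transpose_apply] using this
    have hplus := hq (fun a => (if i = a then (1:ℝ) else 0) + (if j = a then (1:ℝ) else 0))
    have hminus := hq (fun a => (if i = a then (1:ℝ) else 0) - (if j = a then (1:ℝ) else 0))
    have hexp : ∀ (ε : ℝ), (fun a => (if i = a then (1:ℝ) else 0) + ε * (if j = a then (1:ℝ) else 0)) ⬝ᵥ
        (X *ᵥ (fun a => (if i = a then (1:ℝ) else 0) + ε * (if j = a then (1:ℝ) else 0)))
        = X i i + ε * X i j + ε * X j i + ε^2 * X j j := by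
      intro ε
      simp only [dotProduct, Matrix.mulVec, add_mul, mul_add, Finset.sum_add_distrib,
        Finset.mul_sum, mul_ite, mul_one, mul_zero, ite_mul, zero_mul, one_mul,
        Finset.sum_ite_eq, Finset.sum_ite_eq', Finset.mem_univ, if_true]
      ring
    have h1 := hq (fun a => (if i = a then (1:ℝ) else 0) + 1 * (if j = a then (1:ℝ) else 0))
    have h2 := hq (fun a => (if i = a then (1:ℝ) else 0) + (-1) * (if j = a then (1:ℝ) else 0))
    rw [hexp 1] at h1
    rw [hexp (-1)] at h2
    have hii := hdiag i
    have hjj := hdiag j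
    rw [abs_le]
    constructor <;> nlinarith [hsym']
  calc ∑ i, ∑ j, X i j * ((G.adjMatrix ℝ) i j - D)
      ≤ ∑ i, ∑ j, |(G.adjMatrix ℝ) i j - D| := by
        refine Finset.sum_le_sum fun i _ => Finset.sum_le_sum fun j _ => ?_
        calc X i j * ((G.adjMatrix ℝ) i j - D) ≤ |X i j * ((G.adjMatrix ℝ) i j - D)| :=
              le_abs_self _
          _ = |X i j| * |(G.adjMatrix ℝ) i j - D| := abs_mul _ _
          _ ≤ 1 * |(G.adjMatrix ℝ) i j - D| :=
              mul_le_mul_of_nonneg_right (hentry i j) (abs_nonneg _)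
          _ = _ := one_mul _

/-- Let `G` have adjacency eigenvalues `λ₁ ≥ ... ≥ λₙ` and let `K` be the largest index
with `λ_K > 0`. Then `SDP(G) ≥ Σ_{i=2}^{K} λᵢ` (the sum of the positive eigenvalues
other than `λ₁`). -/
theorem stmt10 {n : ℕ} (G : SimpleGraph (Fin n)) [DecidableRel G.Adj]
    (v : Fin n → Fin n → ℝ) (lam : Fin n → ℝ)
    (hortho : ∀ i j, v i ⬝ᵥ v j = if i = j then (1 : ℝ) else 0)
    (heig : ∀ i, (G.adjMatrix ℝ) *ᵥ v i = lam i • v i)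
    (hsort : ∀ i j : Fin n, i ≤ j → lam j ≤ lam i) :
    SDP G ≥ ∑ i ∈ Finset.univ.filter (fun i : Fin n => 1 ≤ (i : ℕ) ∧ 0 < lam i), lam i := by
  classical
  rw [ge_iff_le, SDP]
  set S : Finset (Fin n) := Finset.univ.filter (fun i : Fin n => 1 ≤ (i : ℕ) ∧ 0 < lam i)
    with hS
  set T : Finset (Fin n) := Finset.univ.filter (fun i : Fin n => 0 < lam i) with hT
  have hST : S ⊆ T := by
    intro x hx
    rw [hS, Finset.mem_filter] at hx
    rw [hT, Finset.mem_filter]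
    exact ⟨hx.1, hx.2.2⟩
  by_cases hs : (∑ k ∈ T, (∑ j, v k j)^2) = 0
  · -- all relevant eigenvectors orthogonal to the all-ones vector
    have hc0 : ∀ k ∈ T, (∑ j, v k j) = 0 := by
      intro k hk
      have := (Finset.sum_eq_zero_iff_of_nonneg (fun k _ => sq_nonneg _)).mp hs k hk
      exact pow_eq_zero_iff (two_ne_zero) |>.mp this
    obtain ⟨X, h1, h2, h3, h4⟩ := sdp_feasible G v lam hortho heig S (fun _ => 0) (by simp)
    have hval : ∑ i, ∑ j, X i j * ((G.adjMatrix ℝ) i j - ((∑ k, (G.degree k : ℝ)) / n) / n)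
        = ∑ i ∈ S, lam i := by
      rw [h4]
      have e1 : (∑ k ∈ S, (∑ j, v k j)^2) = 0 :=
        Finset.sum_eq_zero fun k hk => by rw [hc0 k (hST hk)]; ring
      rw [e1]
      simp
    exact le_csSup (sdp_bddAbove G) ⟨X, h1, h2, h3, hval.symm⟩
  · -- the projection of the all-ones vector is nonzero
    have hs0 : (0:ℝ) ≤ ∑ k ∈ T, (∑ j, v k j)^2 := Finset.sum_nonneg fun k _ => sq_nonneg _
    have hspos : (0:ℝ) < ∑ k ∈ T, (∑ j, v k j)^2 := lt_of_le_of_ne hs0 (Ne.symm hs)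
    set s : ℝ := ∑ k ∈ T, (∑ j, v k j)^2 with hsdef
    have hTne : T.Nonempty := by
      rw [Finset.nonempty_iff_ne_empty]
      intro h
      rw [hsdef, h, Finset.sum_empty] at hspos
      exact lt_irrefl 0 hspos
    obtain ⟨k₀, hk₀⟩ := hTne
    haveI : NeZero n := ⟨by rintro rfl; exact k₀.elim0⟩
    have hk₀pos : 0 < lam k₀ := by
      rw [hT, Finset.mem_filter] at hk₀; exact hk₀.2
    have hlam0 : ∀ k, lam k ≤ lam 0 := fun k => hsort 0 k (by
      rw [Fin.le_def]; simp [Fin.val_zero])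
    have h0T : (0 : Fin n) ∈ T := by
      rw [hT, Finset.mem_filter]
      exact ⟨Finset.mem_univ _, lt_of_lt_of_le hk₀pos (hlam0 k₀)⟩
    set b : Fin n → ℝ := fun k => (∑ j, v k j) / Real.sqrt s with hbdef
    have hsqrt : Real.sqrt s ^ 2 = s := Real.sq_sqrt (le_of_lt hspos)
    have hsqrtpos : 0 < Real.sqrt s := Real.sqrt_pos.mpr hspos
    have hb2 : ∀ k, (b k)^2 = (∑ j, v k j)^2 / s := by
      intro k
      rw [hbdef]
      simp only [div_pow, hsqrt]
    have hbsum : (∑ k ∈ T, (b k)^2) = 1 := by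
      rw [Finset.sum_congr rfl fun k _ => hb2 k, ← Finset.sum_div, ← hsdef,
        div_self (ne_of_gt hspos)]
    obtain ⟨X, h1, h2, h3, h4⟩ := sdp_feasible G v lam hortho heig T b (le_of_eq hbsum)
    -- the J-part vanishes
    have hbc : (∑ k ∈ T, b k * (∑ j, v k j)) = Real.sqrt s := by
      have : ∀ k, b k * (∑ j, v k j) = (∑ j, v k j)^2 / Real.sqrt s := by
        intro k; rw [hbdef]; ring
      rw [Finset.sum_congr rfl fun k _ => this k, ← Finset.sum_div, ← hsdef]
      rw [eq_comm, eq_div_iff (ne_of_gt hsqrtpos), ← sq, hsqrt]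
    have hJ : (∑ k ∈ T, (∑ j, v k j)^2) - (∑ k ∈ T, b k * (∑ j, v k j))^2 = 0 := by
      rw [hbc, hsqrt, ← hsdef, sub_self]
    -- bound the subtracted eigenvalue term by lam 0
    have hlb : (∑ k ∈ T, lam k * (b k)^2) ≤ lam 0 := by
      calc ∑ k ∈ T, lam k * (b k)^2 ≤ ∑ k ∈ T, lam 0 * (b k)^2 :=
            Finset.sum_le_sum fun k _ =>
              mul_le_mul_of_nonneg_right (hlam0 k) (sq_nonneg _)
        _ = lam 0 * ∑ k ∈ T, (b k)^2 := by rw [Finset.mul_sum]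
        _ = lam 0 := by rw [hbsum, mul_one]
    -- the sum over S equals the sum over T minus lam 0
    have hSsum : (∑ i ∈ S, lam i) = (∑ k ∈ T, lam k) - lam 0 := by
      have hSe : S = T.erase 0 := by
        ext x
        rw [hS, hT, Finset.mem_filter, Finset.mem_erase, Finset.mem_filter]
        constructor
        · rintro ⟨hu, h1x, h2x⟩
          refine ⟨?_, hu, h2x⟩
          intro h
          rw [h] at h1x
          simp [Fin.val_zero] at h1x
        · rintro ⟨hne, hu, h2x⟩
          refine ⟨hu, ?_, h2x⟩
          rcases Nat.eq_zero_or_pos (x : ℕ) with h | h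
          · exact absurd (Fin.ext (by simp [h, Fin.val_zero])) hne
          · exact h
      rw [hSe, Finset.sum_erase_eq_sub h0T]
    have hval : (∑ i ∈ S, lam i)
        ≤ ∑ i, ∑ j, X i j * ((G.adjMatrix ℝ) i j - ((∑ k, (G.degree k : ℝ)) / n) / n) := by
      rw [h4, hJ, mul_zero, sub_zero, hSsum]
      linarith
    exact le_trans hval (le_csSup (sdp_bddAbove G)
      ⟨X, h1, h2, h3, rfl⟩)
end

section
/- Let G be a graph with maximum degree Δ and adjacency matrix A with eigenvalues λ₁ ≥ ... ≥ λₙ, and K the largest index with λ_K > 0. Then SDP(G) ≥ (1/Δ)·Σ_{i=2}^{K} λᵢ³, where SDP(G) is the semidefinite relaxation max { ⟨X, A − (d/n)J⟩ : X ⪰ 0, X_{ii} ≤ 1 }. -/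
open Finset Matrix

private lemma aux_exchange {n : ℕ} {ι : Type*} (S : Finset ι) (F : ι → Fin n → Fin n → ℝ) :
    ∑ j, ∑ k, ∑ i ∈ S, F i j k = ∑ i ∈ S, ∑ j, ∑ k, F i j k := by
  calc ∑ j, ∑ k, ∑ i ∈ S, F i j k = ∑ j, ∑ i ∈ S, ∑ k, F i j k :=
        Finset.sum_congr rfl fun j _ => Finset.sum_comm
    _ = ∑ i ∈ S, ∑ j, ∑ k, F i j k := Finset.sum_comm

private lemma aux_entry_bound {n : ℕ} {X : Matrix (Fin n) (Fin n) ℝ}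
    (hs : X.IsSymm) (hp : X.PosSemidef) (hd : ∀ i, X i i ≤ 1) (i j : Fin n) :
    |X i j| ≤ 1 := by
  have q : ∀ (ε : ℝ), 0 ≤ X i i + ε * X i j + ε * X j i + ε * (ε * X j j) := by
    intro ε
    let y : Fin n → ℝ := (Pi.single i (1:ℝ) : Fin n → ℝ) + ε • (Pi.single j (1:ℝ) : Fin n → ℝ)
    have h := hp.dotProduct_mulVec_nonneg y
    have hstar : star y = y := by
      funext a; simp [y, Pi.star_apply]
    rw [hstar] at h
    simp only [y] at h
    simp only [Matrix.mulVec_add, Matrix.mulVec_smul, Matrix.mulVec_single,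
      add_dotProduct, smul_dotProduct, single_dotProduct, dotProduct_add,
      dotProduct_smul, smul_eq_mul, mul_one, one_mul] at h
    simp only [MulOpposite.op_one, one_smul, Matrix.col_apply] at h
    linarith [h]
  have h1 := q 1
  have h2 := q (-1)
  have hsym : X j i = X i j := hs.apply i j
  have hii := hd i
  have hjj := hd j
  rw [abs_le]
  constructor <;> nlinarith [h1, h2]

/-- Let `G` have maximum degree `Δ ≥ 1` and adjacency eigenvalues `λ₁ ≥ ... ≥ λₙ`, and
let `K` be the largest index with `λ_K > 0`. Then `SDP(G) ≥ (1/Δ)·Σ_{i=2}^{K} λᵢ³`. -/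
theorem stmt11 {n : ℕ} (G : SimpleGraph (Fin n)) [DecidableRel G.Adj]
    (hΔ : 1 ≤ G.maxDegree)
    (v : Fin n → Fin n → ℝ) (lam : Fin n → ℝ)
    (hortho : ∀ i j, v i ⬝ᵥ v j = if i = j then (1 : ℝ) else 0)
    (heig : ∀ i, (G.adjMatrix ℝ) *ᵥ v i = lam i • v i)
    (hsort : ∀ i j : Fin n, i ≤ j → lam j ≤ lam i) :
    SDP G ≥ (∑ i ∈ Finset.univ.filter (fun i : Fin n => 1 ≤ (i : ℕ) ∧ 0 < lam i), lam i ^ 3)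
      / (G.maxDegree : ℝ) := by
  classical
  have hΔ1 : (1:ℝ) ≤ (G.maxDegree : ℝ) := by exact_mod_cast hΔ
  have hΔ0 : (0:ℝ) < (G.maxDegree : ℝ) := lt_of_lt_of_le zero_lt_one hΔ1
  rw [ge_iff_le]
  unfold SDP
  set Δ : ℝ := (G.maxDegree : ℝ) with hΔdef
  set A : Matrix (Fin n) (Fin n) ℝ := G.adjMatrix ℝ with hAdef
  set c : ℝ := ((∑ k, (G.degree k : ℝ)) / n) / n with hcdef
  -- boundedness of the feasible set
  have hbdd : BddAbove {x : ℝ | ∃ X : Matrix (Fin n) (Fin n) ℝ, X.IsSymm ∧ X.PosSemidef ∧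
      (∀ i, X i i ≤ 1) ∧ x = ∑ i, ∑ j, X i j * (A i j - c)} := by
    refine ⟨∑ j, ∑ k, |A j k - c|, ?_⟩
    rintro x ⟨X, hs, hp, hd, rfl⟩
    refine Finset.sum_le_sum fun j _ => Finset.sum_le_sum fun k _ => ?_
    calc X j k * (A j k - c) ≤ |X j k * (A j k - c)| := le_abs_self _
      _ = |X j k| * |A j k - c| := abs_mul _ _
      _ ≤ 1 * |A j k - c| :=
          mul_le_mul_of_nonneg_right (aux_entry_bound hs hp hd j k) (abs_nonneg _)
      _ = |A j k - c| := one_mul _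
  -- basic spectral identities
  have hVtV : (Matrix.of v)ᵀ * (Matrix.of v) = 1 := by
    apply mul_eq_one_comm.mp
    ext i j
    have := hortho i j
    simpa [Matrix.mul_apply, dotProduct, Matrix.one_apply] using this
  have hcomp : ∀ l k : Fin n, (∑ i, v i l * v i k) = if l = k then (1:ℝ) else 0 := by
    intro l k
    have := congrFun (congrFun hVtV l) k
    simpa [Matrix.mul_apply, Matrix.one_apply] using this
  have heig' : ∀ i j, (∑ k, A j k * v i k) = lam i * v i j := by
    intro i j
    have := congrFun (heig i) j
    simpa [Matrix.mulVec, dotProduct] using this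
  have hA01 : ∀ j k, A j k * A j k = A j k := by
    intro j k
    by_cases h : G.Adj j k <;> simp [hAdef, SimpleGraph.adjMatrix_apply, h]
  have hrow : ∀ j, (∑ k, A j k) = (G.degree j : ℝ) := by
    intro j
    rw [hAdef]
    simp [SimpleGraph.adjMatrix_apply, Finset.sum_boole, SimpleGraph.degree,
      SimpleGraph.neighborFinset_eq_filter]
  have hspec : ∀ j k, (∑ i, lam i * (v i j * v i k)) = A j k := by
    intro j k
    calc ∑ i, lam i * (v i j * v i k) = ∑ i, (∑ l, A j l * v i l) * v i k := by
          refine Finset.sum_congr rfl fun i _ => ?_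
          rw [heig' i j]; ring
      _ = ∑ i, ∑ l, A j l * (v i l * v i k) := by
          refine Finset.sum_congr rfl fun i _ => ?_
          rw [Finset.sum_mul]
          exact Finset.sum_congr rfl fun l _ => by ring
      _ = ∑ l, ∑ i, A j l * (v i l * v i k) := Finset.sum_comm
      _ = ∑ l, A j l * (if l = k then 1 else 0) := by
          refine Finset.sum_congr rfl fun l _ => ?_
          rw [← Finset.mul_sum, hcomp]
      _ = A j k := by simp
  have hdegsq : ∀ j, (∑ i, (lam i * v i j)^2) = (G.degree j : ℝ) := by
    intro j
    calc ∑ i, (lam i * v i j)^2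
        = ∑ i, ∑ l, ∑ m, (A j l * A j m) * (v i l * v i m) := by
          refine Finset.sum_congr rfl fun i _ => ?_
          rw [pow_two, ← heig' i j, Finset.sum_mul_sum]
          exact Finset.sum_congr rfl fun l _ => Finset.sum_congr rfl fun m _ => by ring
      _ = ∑ l, ∑ i, ∑ m, (A j l * A j m) * (v i l * v i m) := Finset.sum_comm
      _ = ∑ l, ∑ m, ∑ i, (A j l * A j m) * (v i l * v i m) :=
          Finset.sum_congr rfl fun l _ => Finset.sum_comm
      _ = ∑ l, ∑ m, (A j l * A j m) * (∑ i, v i l * v i m) :=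
          Finset.sum_congr rfl fun l _ => Finset.sum_congr rfl fun m _ => by
            rw [Finset.mul_sum]
      _ = ∑ l, A j l * A j l := by
          refine Finset.sum_congr rfl fun l _ => ?_
          simp [hcomp, mul_ite]
      _ = (G.degree j : ℝ) := by
          rw [← hrow j]
          exact Finset.sum_congr rfl fun l _ => hA01 j l
  have hpar : (∑ i, (∑ j, v i j)^2) = (n : ℝ) := by
    calc ∑ i, (∑ j, v i j)^2 = ∑ i, ∑ j, ∑ k, v i j * v i k := by
          refine Finset.sum_congr rfl fun i _ => ?_
          rw [pow_two, Finset.sum_mul_sum]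
      _ = ∑ j, ∑ i, ∑ k, v i j * v i k := Finset.sum_comm
      _ = ∑ j, ∑ k, ∑ i, v i j * v i k := Finset.sum_congr rfl fun j _ => Finset.sum_comm
      _ = ∑ j, ∑ k, (if j = k then (1:ℝ) else 0) :=
          Finset.sum_congr rfl fun j _ => Finset.sum_congr rfl fun k _ => hcomp j k
      _ = (n : ℝ) := by simp
  have htrace : (∑ k, (G.degree k : ℝ)) = ∑ i, lam i * (∑ j, v i j)^2 := by
    calc ∑ k, (G.degree k : ℝ) = ∑ k, ∑ l, A k l :=
          Finset.sum_congr rfl fun k _ => (hrow k).symm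
      _ = ∑ k, ∑ l, ∑ i, lam i * (v i k * v i l) :=
          Finset.sum_congr rfl fun k _ => Finset.sum_congr rfl fun l _ => (hspec k l).symm
      _ = ∑ k, ∑ i, ∑ l, lam i * (v i k * v i l) :=
          Finset.sum_congr rfl fun k _ => Finset.sum_comm
      _ = ∑ i, ∑ k, ∑ l, lam i * (v i k * v i l) := Finset.sum_comm
      _ = ∑ i, lam i * (∑ j, v i j)^2 := by
          refine Finset.sum_congr rfl fun i _ => ?_
          rw [pow_two, Finset.sum_mul_sum, Finset.mul_sum]
          refine Finset.sum_congr rfl fun k _ => ?_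
          rw [Finset.mul_sum]
  set S : Finset (Fin n) := Finset.univ.filter (fun i => 0 < lam i) with hSdef
  by_cases hS : S.Nonempty
  · -- main case
    obtain ⟨iw, hiw⟩ := hS
    have hn : 0 < n := iw.pos
    set i0 : Fin n := ⟨0, hn⟩ with hi0def
    have hmax : ∀ i, lam i ≤ lam i0 := fun i => hsort i0 i (by
      rw [Fin.le_def]; exact Nat.zero_le _)
    have hiw' : 0 < lam iw := by
      have := hiw; rw [hSdef, Finset.mem_filter] at this; exact this.2
    have hl0 : 0 < lam i0 := lt_of_lt_of_le hiw' (hmax iw)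
    have hD_nonneg : (0:ℝ) ≤ ∑ k, (G.degree k : ℝ) :=
      Finset.sum_nonneg fun k _ => Nat.cast_nonneg _
    have hD_le : (∑ k, (G.degree k : ℝ)) ≤ lam i0 * n := by
      rw [htrace]
      calc ∑ i, lam i * (∑ j, v i j)^2 ≤ ∑ i, lam i0 * (∑ j, v i j)^2 :=
            Finset.sum_le_sum fun i _ =>
              mul_le_mul_of_nonneg_right (hmax i) (sq_nonneg _)
        _ = lam i0 * (n:ℝ) := by rw [← Finset.mul_sum, hpar]
    have hQ_le : (∑ i ∈ S, lam i^2 * (∑ j, v i j)^2) ≤ lam i0^2 * n := by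
      calc ∑ i ∈ S, lam i^2 * (∑ j, v i j)^2
          ≤ ∑ i ∈ S, lam i0^2 * (∑ j, v i j)^2 := by
            refine Finset.sum_le_sum fun i hi => ?_
            have hpos : 0 < lam i := by
              rw [hSdef, Finset.mem_filter] at hi; exact hi.2
            have hle := hmax i
            exact mul_le_mul_of_nonneg_right (by nlinarith) (sq_nonneg _)
        _ ≤ ∑ i, lam i0^2 * (∑ j, v i j)^2 := by
            refine Finset.sum_le_sum_of_subset_of_nonneg (Finset.filter_subset _ _)
              fun i _ _ => ?_
            positivity
        _ = lam i0^2 * n := by rw [← Finset.mul_sum, hpar]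
    have hQ_nonneg : (0:ℝ) ≤ ∑ i ∈ S, lam i^2 * (∑ j, v i j)^2 :=
      Finset.sum_nonneg fun i _ => by positivity
    -- the witness matrix
    set X : Matrix (Fin n) (Fin n) ℝ :=
      Matrix.of (fun j k => (1/Δ) * ∑ i ∈ S, lam i^2 * (v i j * v i k)) with hXdef
    have hXapp : ∀ j k, X j k = (1/Δ) * ∑ i ∈ S, lam i^2 * (v i j * v i k) := fun j k => rfl
    have hXsymm : X.IsSymm := by
      refine Matrix.IsSymm.ext fun j k => ?_
      rw [hXapp, hXapp]
      refine congrArg _ (Finset.sum_congr rfl fun i _ => by ring)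
    have hXdiag : ∀ j, X j j ≤ 1 := by
      intro j
      have h1 : (∑ i ∈ S, lam i^2 * (v i j * v i j)) ≤ (G.degree j : ℝ) := by
        rw [← hdegsq j]
        calc ∑ i ∈ S, lam i^2 * (v i j * v i j)
            ≤ ∑ i, lam i^2 * (v i j * v i j) := by
              refine Finset.sum_le_sum_of_subset_of_nonneg (Finset.filter_subset _ _)
                fun i _ _ => ?_
              nlinarith [sq_nonneg (lam i * v i j), sq_nonneg (v i j)]
          _ = ∑ i, (lam i * v i j)^2 := Finset.sum_congr rfl fun i _ => by ring
      have hdegΔ : (G.degree j : ℝ) ≤ Δ := by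
        rw [hΔdef]; exact_mod_cast G.degree_le_maxDegree j
      rw [hXapp]
      calc (1/Δ) * ∑ i ∈ S, lam i^2 * (v i j * v i j) ≤ (1/Δ) * Δ :=
            mul_le_mul_of_nonneg_left (h1.trans hdegΔ) (by positivity)
        _ = 1 := by field_simp
    have hXpsd : X.PosSemidef := by
      refine Matrix.PosSemidef.of_dotProduct_mulVec_nonneg ?_ ?_
      · rw [Matrix.IsHermitian, Matrix.conjTranspose_eq_transpose_of_trivial]
        exact hXsymm
      · intro y
        have hstar : star y = y := by funext a; simp [Pi.star_apply]
        rw [hstar]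
        have hmv : ∀ j, (X *ᵥ y) j = ∑ i ∈ S, (1/Δ) * (lam i^2 * (v i j * (v i ⬝ᵥ y))) := by
          intro j
          show ∑ k, X j k * y k = _
          calc ∑ k, X j k * y k
              = ∑ k, ∑ i ∈ S, (1/Δ) * (lam i^2 * (v i j * (v i k * y k))) := by
                refine Finset.sum_congr rfl fun k _ => ?_
                rw [hXapp, mul_assoc, Finset.sum_mul, Finset.mul_sum]
                exact Finset.sum_congr rfl fun i _ => by ring
            _ = ∑ i ∈ S, ∑ k, (1/Δ) * (lam i^2 * (v i j * (v i k * y k))) := Finset.sum_comm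
            _ = ∑ i ∈ S, (1/Δ) * (lam i^2 * (v i j * (v i ⬝ᵥ y))) := by
                refine Finset.sum_congr rfl fun i _ => ?_
                rw [dotProduct, Finset.mul_sum, Finset.mul_sum, Finset.mul_sum]
        have : y ⬝ᵥ (X *ᵥ y) = ∑ i ∈ S, (1/Δ) * (lam i^2 * (v i ⬝ᵥ y)^2) := by
          rw [dotProduct]
          calc ∑ j, y j * (X *ᵥ y) j
              = ∑ j, ∑ i ∈ S, (1/Δ) * (lam i^2 * ((y j * v i j) * (v i ⬝ᵥ y))) := by
                refine Finset.sum_congr rfl fun j _ => ?_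
                rw [hmv j, Finset.mul_sum]
                exact Finset.sum_congr rfl fun i _ => by ring
            _ = ∑ i ∈ S, ∑ j, (1/Δ) * (lam i^2 * ((y j * v i j) * (v i ⬝ᵥ y))) :=
                Finset.sum_comm
            _ = ∑ i ∈ S, (1/Δ) * (lam i^2 * (v i ⬝ᵥ y)^2) := by
                refine Finset.sum_congr rfl fun i _ => ?_
                rw [← Finset.mul_sum]
                congr 1
                rw [← Finset.mul_sum]
                congr 1
                rw [← Finset.sum_mul, pow_two]
                congr 1
                rw [dotProduct]
                exact Finset.sum_congr rfl fun j _ => by ring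
        rw [this]
        exact Finset.sum_nonneg fun i _ => by positivity
    -- objective value
    have hPerI : ∀ i, (∑ j, ∑ k, (v i j * v i k) * (A j k - c))
        = lam i - c * (∑ j, v i j)^2 := by
      intro i
      calc ∑ j, ∑ k, (v i j * v i k) * (A j k - c)
          = ∑ j, ((v i j * (lam i * v i j)) - c * (v i j * (∑ k, v i k))) := by
            refine Finset.sum_congr rfl fun j _ => ?_
            rw [← heig' i j]
            rw [Finset.mul_sum, Finset.mul_sum, Finset.mul_sum, ← Finset.sum_sub_distrib]
            exact Finset.sum_congr rfl fun k _ => by ring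
        _ = (∑ j, v i j * (lam i * v i j)) - c * ((∑ j, v i j) * (∑ k, v i k)) := by
            rw [Finset.sum_sub_distrib, ← Finset.mul_sum, ← Finset.sum_mul]
        _ = lam i * (v i ⬝ᵥ v i) - c * (∑ j, v i j)^2 := by
            congr 1
            · rw [dotProduct, Finset.mul_sum]
              exact Finset.sum_congr rfl fun j _ => by ring
            · rw [pow_two]
        _ = lam i - c * (∑ j, v i j)^2 := by rw [hortho i i]; simp
    have hobj : (∑ j, ∑ k, X j k * (A j k - c))
        = ((∑ i ∈ S, lam i^3) - c * (∑ i ∈ S, lam i^2 * (∑ j, v i j)^2)) / Δ := by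
      calc ∑ j, ∑ k, X j k * (A j k - c)
          = ∑ j, ∑ k, ∑ i ∈ S, (1/Δ) * (lam i^2 * ((v i j * v i k) * (A j k - c))) := by
            refine Finset.sum_congr rfl fun j _ => Finset.sum_congr rfl fun k _ => ?_
            rw [hXapp, mul_assoc, Finset.sum_mul, Finset.mul_sum]
            exact Finset.sum_congr rfl fun i _ => by ring
        _ = ∑ i ∈ S, ∑ j, ∑ k, (1/Δ) * (lam i^2 * ((v i j * v i k) * (A j k - c))) :=
            aux_exchange _ _
        _ = ∑ i ∈ S, (1/Δ) * (lam i^2 * (lam i - c * (∑ j, v i j)^2)) := by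
            refine Finset.sum_congr rfl fun i _ => ?_
            simp only [← hPerI i, Finset.mul_sum]
        _ = ((∑ i ∈ S, lam i^3) - c * (∑ i ∈ S, lam i^2 * (∑ j, v i j)^2)) / Δ := by
            rw [sub_div, Finset.sum_div, Finset.mul_sum, Finset.sum_div]
            rw [← Finset.sum_sub_distrib]
            refine Finset.sum_congr rfl fun i _ => ?_
            field_simp
    -- the inequality
    have hc_nonneg : (0:ℝ) ≤ c := by
      rw [hcdef]
      have : (0:ℝ) ≤ (n:ℝ) := Nat.cast_nonneg _
      exact div_nonneg (div_nonneg hD_nonneg this) this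
    have hn' : (0:ℝ) < (n:ℝ) := by exact_mod_cast hn
    have hcn : c * n ≤ lam i0 := by
      rw [hcdef, div_div, div_mul_eq_mul_div,
        div_le_iff₀ (by positivity : (0:ℝ) < (n:ℝ) * n)]
      nlinarith [hD_le, hn']
    have hcQ : c * (∑ i ∈ S, lam i^2 * (∑ j, v i j)^2) ≤ lam i0^3 := by
      calc c * (∑ i ∈ S, lam i^2 * (∑ j, v i j)^2) ≤ c * (lam i0^2 * n) :=
            mul_le_mul_of_nonneg_left hQ_le hc_nonneg
        _ = (c * n) * lam i0^2 := by ring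
        _ ≤ lam i0 * lam i0^2 := mul_le_mul_of_nonneg_right hcn (sq_nonneg _)
        _ = lam i0^3 := by ring
    -- split the sum
    set S' : Finset (Fin n) := Finset.univ.filter (fun i : Fin n => 1 ≤ (i:ℕ) ∧ 0 < lam i)
      with hS'def
    have hi0notin : i0 ∉ S' := by
      rw [hS'def, Finset.mem_filter]
      rintro ⟨-, h1, -⟩
      simp [hi0def] at h1
    have hsplit : S = insert i0 S' := by
      ext i
      rw [hSdef, Finset.mem_filter, Finset.mem_insert, hS'def, Finset.mem_filter]
      constructor
      · rintro ⟨-, h⟩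
        by_cases hi : i = i0
        · exact Or.inl hi
        · refine Or.inr ⟨Finset.mem_univ _, ?_, h⟩
          refine Nat.one_le_iff_ne_zero.mpr fun h0 => hi ?_
          apply Fin.ext
          simpa [hi0def] using h0
      · rintro (rfl | ⟨-, -, h⟩)
        · exact ⟨Finset.mem_univ _, hl0⟩
        · exact ⟨Finset.mem_univ _, h⟩
    have hsum_split : (∑ i ∈ S, lam i^3) = lam i0^3 + ∑ i ∈ S', lam i^3 := by
      rw [hsplit, Finset.sum_insert hi0notin]
    -- put it together
    have hval_ge : (∑ i ∈ S', lam i^3) / Δ ≤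
        ((∑ i ∈ S, lam i^3) - c * (∑ i ∈ S, lam i^2 * (∑ j, v i j)^2)) / Δ := by
      refine (div_le_div_iff_of_pos_right hΔ0).mpr ?_
      linarith [hcQ, hsum_split]
    exact le_trans hval_ge (le_csSup hbdd ⟨X, hXsymm, hXpsd, hXdiag, hobj.symm⟩)
  · -- empty case
    have hempty : Finset.univ.filter (fun i : Fin n => 1 ≤ (i:ℕ) ∧ 0 < lam i) = ∅ := by
      rw [Finset.not_nonempty_iff_eq_empty, hSdef] at hS
      refine Finset.filter_eq_empty_iff.mpr fun i _ => ?_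
      rintro ⟨-, h⟩
      have : i ∈ Finset.univ.filter (fun i => 0 < lam i) := by
        rw [Finset.mem_filter]; exact ⟨Finset.mem_univ _, h⟩
      rw [hS] at this
      exact absurd this (Finset.notMem_empty _)
    rw [hempty]
    simp only [Finset.sum_empty, zero_div]
    refine le_csSup hbdd ?_
    refine ⟨0, ?_, Matrix.PosSemidef.zero, fun i => by norm_num [Matrix.zero_apply], by simp⟩
    simp [Matrix.IsSymm]
end

section
/- Let G be a graph with maximum degree Δ ≥ 1, adjacency matrix A with eigenvalues λ₁ ≥ ... ≥ λₙ, and K the number of positive eigenvalues. Then SDP(G) ≥ (1/√Δ)·Σ_{i=2}^{K} λᵢ², where SDP(G) = max { ⟨X, A − (d/n)J⟩ : X symmetric, X ⪰ 0, X_{ii} ≤ 1 for all i }. -/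
open Finset Matrix

private lemma psd_abs_entry_le_one {n : ℕ} {Y : Matrix (Fin n) (Fin n) ℝ}
    (hY : Y.PosSemidef) (hdiag : ∀ i, Y i i ≤ 1) (j k : Fin n) : |Y j k| ≤ 1 := by
  have hsym : Y k j = Y j k := by
    have := congrFun (congrFun hY.1 j) k
    simpa [Matrix.conjTranspose_apply] using this
  have quad : ∀ t : ℝ, 0 ≤ Y j j + t * Y j k + t * Y k j + t * t * Y k k := by
    intro t
    have h := hY.dotProduct_mulVec_nonneg (fun a => (if a = j then (1:ℝ) else 0) + t * (if a = k then 1 else 0))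
    simp [Matrix.mulVec, dotProduct, mul_add, add_mul, mul_ite, ite_mul,
      Finset.sum_add_distrib, Finset.mul_sum, mul_comm, mul_assoc, mul_left_comm] at h
    linarith
  rw [abs_le]
  constructor <;> nlinarith [quad 1, quad (-1), hdiag j, hdiag k]

/-- Let `G` have maximum degree `Δ ≥ 1` and adjacency eigenvalues `λ₁ ≥ ... ≥ λₙ`, and
let `K` be the number of positive eigenvalues. Then `SDP(G) ≥ (1/√Δ)·Σ_{i=2}^{K} λᵢ²`. -/
theorem stmt13 {n : ℕ} (G : SimpleGraph (Fin n)) [DecidableRel G.Adj]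
    (hΔ : 1 ≤ G.maxDegree)
    (v : Fin n → Fin n → ℝ) (lam : Fin n → ℝ)
    (hortho : ∀ i j, v i ⬝ᵥ v j = if i = j then (1 : ℝ) else 0)
    (heig : ∀ i, (G.adjMatrix ℝ) *ᵥ v i = lam i • v i)
    (hsort : ∀ i j : Fin n, i ≤ j → lam j ≤ lam i) :
    SDP G ≥ (∑ i ∈ Finset.univ.filter (fun i : Fin n => 1 ≤ (i : ℕ) ∧ 0 < lam i), lam i ^ 2)
      / Real.sqrt (G.maxDegree : ℝ) := by
  classical
  have hn : 0 < n := by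
    rcases Nat.eq_zero_or_pos n with h | h
    · exfalso
      subst h
      have : G.maxDegree = 0 := by simp [SimpleGraph.maxDegree]
      omega
    · exact h
  set A : Matrix (Fin n) (Fin n) ℝ := G.adjMatrix ℝ with hAdef
  have hVtV : ∀ j k : Fin n, (∑ i, v i j * v i k) = if j = k then (1:ℝ) else 0 := by
    have h1 : (Matrix.of v) * (Matrix.of v)ᵀ = (1 : Matrix (Fin n) (Fin n) ℝ) := by
      ext a b
      simpa [Matrix.mul_apply, Matrix.one_apply, dotProduct] using hortho a b
    have h2 := mul_eq_one_comm.mp h1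
    intro j k
    have := congrFun (congrFun h2 j) k
    simpa [Matrix.mul_apply, Matrix.one_apply] using this
  have hAv : ∀ i j, (∑ k, A j k * v i k) = lam i * v i j := by
    intro i j
    have := congrFun (heig i) j
    simpa [Matrix.mulVec, dotProduct, hAdef] using this
  have hAspec : ∀ j k, A j k = ∑ i, lam i * v i j * v i k := by
    intro j k
    have h1 : A j k = ∑ m, A j m * ∑ i, v i m * v i k := by
      simp_rw [hVtV]
      simp [Finset.sum_ite_eq, mul_ite]
    rw [h1]
    calc ∑ m, A j m * ∑ i, v i m * v i k
        = ∑ m, ∑ i, (A j m * v i m) * v i k := by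
          refine Finset.sum_congr rfl fun m _ => ?_
          rw [Finset.mul_sum]
          exact Finset.sum_congr rfl fun i _ => by ring
      _ = ∑ i, ∑ m, (A j m * v i m) * v i k := Finset.sum_comm
      _ = ∑ i, (∑ m, A j m * v i m) * v i k := by
          exact Finset.sum_congr rfl fun i _ => (Finset.sum_mul _ _ _).symm
      _ = ∑ i, lam i * v i j * v i k := by
          exact Finset.sum_congr rfl fun i _ => by rw [hAv]
  have hdeg : ∀ j, (∑ i, lam i ^ 2 * v i j ^ 2) = (G.degree j : ℝ) := by
    intro j
    have h1 : (A * A) j j = (G.degree j : ℝ) := by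
      simpa [hAdef] using G.adjMatrix_mul_self_apply_self (α := ℝ) j
    rw [← h1, Matrix.mul_apply]
    calc ∑ i, lam i ^ 2 * v i j ^ 2
        = ∑ i, (∑ k, A j k * v i k) * (lam i * v i j) := by
          refine Finset.sum_congr rfl fun i _ => ?_
          rw [hAv]; ring
      _ = ∑ i, ∑ k, (A j k * v i k) * (lam i * v i j) := by
          exact Finset.sum_congr rfl fun i _ => Finset.sum_mul _ _ _
      _ = ∑ k, ∑ i, (A j k * v i k) * (lam i * v i j) := Finset.sum_comm
      _ = ∑ k, A j k * ∑ i, lam i * v i k * v i j := by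
          refine Finset.sum_congr rfl fun k _ => ?_
          rw [Finset.mul_sum]
          exact Finset.sum_congr rfl fun i _ => by ring
      _ = ∑ k, A j k * A k j := by
          exact Finset.sum_congr rfl fun k _ => by rw [← hAspec]
  -- scalars
  have hΔ1 : (1:ℝ) ≤ (G.maxDegree : ℝ) := by exact_mod_cast hΔ
  have hΔ0 : (0:ℝ) < (G.maxDegree : ℝ) := by linarith
  set s : ℝ := Real.sqrt (G.maxDegree : ℝ) with hsdef
  have hs0 : 0 < s := Real.sqrt_pos.mpr hΔ0
  have hss : s * s = (G.maxDegree : ℝ) := Real.mul_self_sqrt hΔ0.le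
  set lp : Fin n → ℝ := fun i => max (lam i) 0 with hlpdef
  have hlp0 : ∀ i, 0 ≤ lp i := fun i => le_max_right _ _
  set M : Matrix (Fin n) (Fin n) ℝ :=
    Matrix.of (fun j k => ∑ i, lp i * v i j * v i k) with hMdef
  set X : Matrix (Fin n) (Fin n) ℝ := s⁻¹ • M with hXdef
  have hXapp : ∀ j k, X j k = s⁻¹ * M j k := fun _ _ => rfl
  have hMapp : ∀ j k, M j k = ∑ i, lp i * v i j * v i k := fun _ _ => rfl
  -- quadratic form of M
  have hMquad : ∀ x : Fin n → ℝ, x ⬝ᵥ (M *ᵥ x)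
      = ∑ i, lp i * ((∑ j, v i j * x j) * (∑ j, v i j * x j)) := by
    intro x
    calc x ⬝ᵥ (M *ᵥ x)
        = ∑ a, x a * ∑ b, (∑ i, lp i * v i a * v i b) * x b := rfl
      _ = ∑ a, ∑ b, ∑ i, (lp i * (v i a * x a)) * (v i b * x b) := by
          refine Finset.sum_congr rfl fun a _ => ?_
          rw [Finset.mul_sum]
          refine Finset.sum_congr rfl fun b _ => ?_
          rw [Finset.sum_mul, Finset.mul_sum]
          exact Finset.sum_congr rfl fun i _ => by ring
      _ = ∑ a, ∑ i, ∑ b, (lp i * (v i a * x a)) * (v i b * x b) := by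
          exact Finset.sum_congr rfl fun a _ => Finset.sum_comm
      _ = ∑ i, ∑ a, ∑ b, (lp i * (v i a * x a)) * (v i b * x b) := Finset.sum_comm
      _ = ∑ i, lp i * ((∑ j, v i j * x j) * (∑ j, v i j * x j)) := by
          refine Finset.sum_congr rfl fun i _ => ?_
          rw [Finset.sum_mul_sum, Finset.mul_sum]
          refine Finset.sum_congr rfl fun a _ => ?_
          rw [Finset.mul_sum]
          exact Finset.sum_congr rfl fun b _ => by ring
  -- X symmetric
  have hXsymm : X.IsSymm := by
    ext j k
    simp only [Matrix.transpose_apply, hXapp, hMapp]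
    congr 1
    exact Finset.sum_congr rfl fun i _ => by ring
  have hXpsd : X.PosSemidef := by
    rw [Matrix.posSemidef_iff_dotProduct_mulVec]
    constructor
    · show Xᴴ = X
      ext j k
      simp only [Matrix.conjTranspose_apply, star_trivial, hXapp, hMapp]
      congr 1
      exact Finset.sum_congr rfl fun i _ => by ring
    · intro x
      have hsx : star x = x := by
        funext a; exact star_trivial _
      rw [hsx, hXdef, Matrix.smul_mulVec, dotProduct_smul, smul_eq_mul, hMquad]
      have : 0 ≤ ∑ i, lp i * ((∑ j, v i j * x j) * (∑ j, v i j * x j)) :=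
        Finset.sum_nonneg fun i _ => mul_nonneg (hlp0 i) (mul_self_nonneg _)
      exact mul_nonneg (by positivity) this
  -- diagonal bound
  have hXdiag : ∀ j, X j j ≤ 1 := by
    intro j
    have hv1 : (∑ i, v i j * v i j) = 1 := by simpa using hVtV j j
    have ht0 : 0 ≤ ∑ i, lp i * v i j * v i j :=
      Finset.sum_nonneg fun i _ => by
        rw [mul_assoc]; exact mul_nonneg (hlp0 i) (mul_self_nonneg _)
    have hcs := Finset.sum_mul_sq_le_sq_mul_sq Finset.univ
      (fun i => lp i * v i j) (fun i => v i j)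
    have h2 : (∑ i, (lp i * v i j)^2) ≤ ∑ i, lam i ^2 * v i j ^2 := by
      refine Finset.sum_le_sum fun i _ => ?_
      rw [mul_pow]
      refine mul_le_mul_of_nonneg_right ?_ (sq_nonneg _)
      have hlpi : lp i = max (lam i) 0 := rfl
      rcases le_total (lam i) 0 with h | h
      · rw [hlpi, max_eq_right h]
        nlinarith [sq_nonneg (lam i)]
      · rw [hlpi, max_eq_left h]
    have h3 : (∑ i, (v i j)^2) = 1 := by
      simpa [sq] using hv1
    have h4 : (∑ i, lp i * v i j * v i j)^2 ≤ s * s := by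
      rw [hss]
      calc (∑ i, lp i * v i j * v i j)^2
          ≤ (∑ i, (lp i * v i j)^2) * (∑ i, (v i j)^2) := hcs
        _ ≤ (∑ i, lam i ^2 * v i j ^2) * 1 := by
            rw [h3]; exact mul_le_mul_of_nonneg_right h2 (by norm_num)
        _ = (G.degree j : ℝ) := by rw [mul_one, hdeg j]
        _ ≤ (G.maxDegree : ℝ) := by exact_mod_cast G.degree_le_maxDegree j
    have h5 : ∑ i, lp i * v i j * v i j ≤ s := by
      nlinarith [h4, ht0, hs0]
    have h6 : X j j = (∑ i, lp i * v i j * v i j) * s⁻¹ := by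
      rw [hXapp, hMapp]; ring
    rw [h6]
    calc (∑ i, lp i * v i j * v i j) * s⁻¹ ≤ s * s⁻¹ :=
          mul_le_mul_of_nonneg_right h5 (by positivity)
      _ = 1 := mul_inv_cancel₀ hs0.ne'
  -- c i := row sums
  have hQ : (∑ j, ∑ k, M j k) = ∑ i, lp i * ((∑ j, v i j) * (∑ j, v i j)) := by
    have h := hMquad (fun _ => 1)
    simpa [dotProduct, Matrix.mulVec] using h
  have hc2 : (∑ i, (∑ j, v i j) * (∑ j, v i j)) = (n : ℝ) := by
    calc ∑ i, (∑ j, v i j) * (∑ j, v i j)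
        = ∑ i, ∑ j, ∑ k, v i j * v i k := by
          exact Finset.sum_congr rfl fun i _ => Finset.sum_mul_sum _ _ _ _
      _ = ∑ j, ∑ i, ∑ k, v i j * v i k := Finset.sum_comm
      _ = ∑ j, ∑ k, ∑ i, v i j * v i k := by
          exact Finset.sum_congr rfl fun j _ => Finset.sum_comm
      _ = ∑ j : Fin n, (1:ℝ) := by
          refine Finset.sum_congr rfl fun j _ => ?_
          simp_rw [hVtV]
          simp
      _ = n := by simp
  have hT : (∑ j, ∑ k, M j k * A j k) = ∑ i, lp i * lam i := by
    have step1 : ∀ j, (∑ k, M j k * A j k) = ∑ i, (lp i * v i j) * (lam i * v i j) := by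
      intro j
      calc (∑ k, M j k * A j k)
          = ∑ k, ∑ i, (lp i * v i j) * (A j k * v i k) := by
            refine Finset.sum_congr rfl fun k _ => ?_
            rw [hMapp, Finset.sum_mul]
            exact Finset.sum_congr rfl fun i _ => by ring
        _ = ∑ i, ∑ k, (lp i * v i j) * (A j k * v i k) := Finset.sum_comm
        _ = ∑ i, (lp i * v i j) * (∑ k, A j k * v i k) := by
            exact Finset.sum_congr rfl fun i _ => (Finset.mul_sum _ _ _).symm
        _ = ∑ i, (lp i * v i j) * (lam i * v i j) := by
            exact Finset.sum_congr rfl fun i _ => by rw [hAv]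
    calc (∑ j, ∑ k, M j k * A j k)
        = ∑ j, ∑ i, (lp i * v i j) * (lam i * v i j) := Finset.sum_congr rfl fun j _ => step1 j
      _ = ∑ i, ∑ j, (lp i * v i j) * (lam i * v i j) := Finset.sum_comm
      _ = ∑ i, (lp i * lam i) * (∑ j, v i j * v i j) := by
          refine Finset.sum_congr rfl fun i _ => ?_
          rw [Finset.mul_sum]
          exact Finset.sum_congr rfl fun j _ => by ring
      _ = ∑ i, lp i * lam i := by
          refine Finset.sum_congr rfl fun i _ => ?_
          rw [show (∑ j, v i j * v i j) = 1 by simpa [dotProduct] using hortho i i, mul_one]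
  have hDA : (∑ k, (G.degree k : ℝ)) = ∑ j, ∑ k, A j k := by
    refine Finset.sum_congr rfl fun j _ => ?_
    have h := SimpleGraph.adjMatrix_mulVec_const_apply (G := G) (α := ℝ) (a := (1:ℝ)) (v := j)
    simpa [Matrix.mulVec, dotProduct, hAdef] using h.symm
  have hD2 : (∑ j, ∑ k, A j k) = ∑ i, lam i * ((∑ j, v i j) * (∑ j, v i j)) := by
    calc ∑ j, ∑ k, A j k
        = ∑ j, ∑ k, ∑ i, lam i * v i j * v i k := by
          exact Finset.sum_congr rfl fun j _ => Finset.sum_congr rfl fun k _ => hAspec j k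
      _ = ∑ j, ∑ i, ∑ k, lam i * v i j * v i k := by
          exact Finset.sum_congr rfl fun j _ => Finset.sum_comm
      _ = ∑ i, ∑ j, ∑ k, lam i * v i j * v i k := Finset.sum_comm
      _ = ∑ i, lam i * ((∑ j, v i j) * (∑ j, v i j)) := by
          refine Finset.sum_congr rfl fun i _ => ?_
          rw [Finset.sum_mul_sum, Finset.mul_sum]
          refine Finset.sum_congr rfl fun a _ => ?_
          rw [Finset.mul_sum]
          exact Finset.sum_congr rfl fun b _ => by ring
  -- endgame scalars
  set N : ℝ := (n : ℝ) with hNdef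
  have hN0 : (0:ℝ) < N := by rw [hNdef]; exact_mod_cast hn
  set Dg : ℝ := ∑ k, (G.degree k : ℝ) with hDgdef
  set z : Fin n := ⟨0, hn⟩ with hzdef
  have hzle : ∀ i : Fin n, z ≤ i := fun i => Fin.mk_le_of_le_val (Nat.zero_le _)
  have hlam_le : ∀ i, lam i ≤ lam z := fun i => hsort z i (hzle i)
  have hlp_le : ∀ i, lp i ≤ lp z := fun i => max_le_max (hlam_le i) le_rfl
  have hD0 : 0 ≤ Dg := Finset.sum_nonneg fun k _ => by positivity
  have hDle : Dg ≤ lp z * N := by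
    rw [hDA, hD2]
    calc (∑ i, lam i * ((∑ j, v i j) * (∑ j, v i j)))
        ≤ ∑ i, lp z * ((∑ j, v i j) * (∑ j, v i j)) := by
          refine Finset.sum_le_sum fun i _ => ?_
          exact mul_le_mul_of_nonneg_right ((hlam_le i).trans (le_max_left _ _))
            (mul_self_nonneg _)
      _ = lp z * N := by rw [← Finset.mul_sum, hc2]
  have hQle : (∑ j, ∑ k, M j k) ≤ lp z * N := by
    rw [hQ]
    calc (∑ i, lp i * ((∑ j, v i j) * (∑ j, v i j)))
        ≤ ∑ i, lp z * ((∑ j, v i j) * (∑ j, v i j)) := by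
          refine Finset.sum_le_sum fun i _ => ?_
          exact mul_le_mul_of_nonneg_right (hlp_le i) (mul_self_nonneg _)
      _ = lp z * N := by rw [← Finset.mul_sum, hc2]
  have hQ0 : 0 ≤ (∑ j, ∑ k, M j k) := by
    rw [hQ]
    exact Finset.sum_nonneg fun i _ => mul_nonneg (hlp0 i) (mul_self_nonneg _)
  have key : (Dg / N / N) * (∑ j, ∑ k, M j k) ≤ lp z * lp z := by
    rw [div_div, div_mul_eq_mul_div, div_le_iff₀ (by positivity : (0:ℝ) < N * N)]
    have h7 : Dg * (∑ j, ∑ k, M j k) ≤ (lp z * N) * (lp z * N) :=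
      mul_le_mul hDle hQle hQ0 (mul_nonneg (hlp0 z) hN0.le)
    nlinarith [h7]
  have hPl : ∀ i, lp i * lam i = lp i * lp i := by
    intro i
    have hlpi : lp i = max (lam i) 0 := rfl
    rcases le_total (lam i) 0 with h | h
    · rw [hlpi, max_eq_right h]; ring
    · rw [hlpi, max_eq_left h]
  have hPsplit : (∑ i ∈ Finset.univ.filter (fun i : Fin n => 1 ≤ (i : ℕ) ∧ 0 < lam i),
      lam i ^ 2) + lp z * lp z ≤ ∑ i, lp i * lam i := by
    have hFsub : (Finset.univ.filter (fun i : Fin n => 1 ≤ (i : ℕ) ∧ 0 < lam i))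
        ⊆ Finset.univ.erase z := by
      intro i hi
      rw [Finset.mem_filter] at hi
      refine Finset.mem_erase.mpr ⟨?_, Finset.mem_univ _⟩
      intro hiz
      rw [hiz] at hi
      simp [hzdef] at hi
    have h8 : (∑ i ∈ Finset.univ.filter (fun i : Fin n => 1 ≤ (i : ℕ) ∧ 0 < lam i), lam i ^ 2)
        = ∑ i ∈ Finset.univ.filter (fun i : Fin n => 1 ≤ (i : ℕ) ∧ 0 < lam i), lp i * lp i := by
      refine Finset.sum_congr rfl fun i hi => ?_
      rw [Finset.mem_filter] at hi
      have : lp i = lam i := max_eq_left hi.2.2.le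
      rw [this]; ring
    have h9 : (∑ i ∈ Finset.univ.filter (fun i : Fin n => 1 ≤ (i : ℕ) ∧ 0 < lam i), lp i * lp i)
        ≤ ∑ i ∈ Finset.univ.erase z, lp i * lp i :=
      Finset.sum_le_sum_of_subset_of_nonneg hFsub fun i _ _ => mul_nonneg (hlp0 i) (hlp0 i)
    have h10 : (∑ i ∈ Finset.univ.erase z, lp i * lp i) + lp z * lp z
        = ∑ i, lp i * lp i := Finset.sum_erase_add _ _ (Finset.mem_univ z)
    have h11 : (∑ i, lp i * lam i) = ∑ i, lp i * lp i :=
      Finset.sum_congr rfl fun i _ => hPl i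
    linarith
  -- objective value
  have hx0 : (∑ j, ∑ k, X j k * (A j k - Dg / N / N))
      = s⁻¹ * ((∑ j, ∑ k, M j k * A j k) - (Dg / N / N) * (∑ j, ∑ k, M j k)) := by
    have hterm : ∀ j k, X j k * (A j k - Dg / N / N)
        = s⁻¹ * (M j k * A j k) - s⁻¹ * ((Dg / N / N) * M j k) := by
      intro j k; rw [hXapp]; ring
    simp_rw [hterm, Finset.sum_sub_distrib, ← Finset.mul_sum]
    ring
  have hgoal : (∑ i ∈ Finset.univ.filter (fun i : Fin n => 1 ≤ (i : ℕ) ∧ 0 < lam i),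
      lam i ^ 2) / s ≤ ∑ j, ∑ k, X j k * (A j k - Dg / N / N) := by
    rw [hx0, hT, div_eq_inv_mul]
    refine mul_le_mul_of_nonneg_left ?_ (by positivity)
    linarith [key, hPsplit]
  -- boundedness and membership
  have hbdd : BddAbove {x : ℝ | ∃ X : Matrix (Fin n) (Fin n) ℝ, X.IsSymm ∧ X.PosSemidef ∧
      (∀ i, X i i ≤ 1) ∧
      x = ∑ i, ∑ j, X i j * ((G.adjMatrix ℝ) i j - ((∑ k, (G.degree k : ℝ)) / n) / n)} := by
    refine ⟨∑ j, ∑ k, |(G.adjMatrix ℝ) j k - ((∑ k, (G.degree k : ℝ)) / n) / n|, ?_⟩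
    rintro x ⟨Y, hYs, hYp, hYd, rfl⟩
    refine Finset.sum_le_sum fun j _ => Finset.sum_le_sum fun k _ => ?_
    calc Y j k * ((G.adjMatrix ℝ) j k - ((∑ k, (G.degree k : ℝ)) / n) / n)
        ≤ |Y j k * ((G.adjMatrix ℝ) j k - ((∑ k, (G.degree k : ℝ)) / n) / n)| := le_abs_self _
      _ = |Y j k| * |(G.adjMatrix ℝ) j k - ((∑ k, (G.degree k : ℝ)) / n) / n| := abs_mul _ _
      _ ≤ 1 * |(G.adjMatrix ℝ) j k - ((∑ k, (G.degree k : ℝ)) / n) / n| :=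
          mul_le_mul_of_nonneg_right (psd_abs_entry_le_one hYp hYd j k) (abs_nonneg _)
      _ = |(G.adjMatrix ℝ) j k - ((∑ k, (G.degree k : ℝ)) / n) / n| := one_mul _
  have hmem : (∑ j, ∑ k, X j k * (A j k - Dg / N / N))
      ∈ {x : ℝ | ∃ X : Matrix (Fin n) (Fin n) ℝ, X.IsSymm ∧ X.PosSemidef ∧
      (∀ i, X i i ≤ 1) ∧
      x = ∑ i, ∑ j, X i j * ((G.adjMatrix ℝ) i j - ((∑ k, (G.degree k : ℝ)) / n) / n)} :=
    ⟨X, hXsymm, hXpsd, hXdiag, rfl⟩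
  rw [ge_iff_le]
  have hS : SDP G = sSup {x : ℝ | ∃ X : Matrix (Fin n) (Fin n) ℝ, X.IsSymm ∧ X.PosSemidef ∧
      (∀ i, X i i ≤ 1) ∧
      x = ∑ i, ∑ j, X i j * ((G.adjMatrix ℝ) i j - ((∑ k, (G.degree k : ℝ)) / n) / n)} := rfl
  rw [hS]
  exact le_trans hgoal (le_csSup hbdd hmem)
end

section
/- Let G be a d-regular graph with adjacency matrix A, eigenvalues d = λ₁ ≥ λ₂ ≥ ... ≥ λₙ and orthonormal eigenvectors v₁ = (1/√n)𝟙, v₂,...,vₙ. For Δ = d ≥ 1 and t ≥ (1/2)√d with t > 0, the matrix E = Σ_{i : λᵢ ≥ t} (λᵢ/t)·vᵢvᵢᵀ satisfies E_{jj} ≤ (3/4)·(√d/t) for every j; in particular, if t = √d then E_{jj} ≤ 1. -/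
open Finset Matrix

/-- Let `G` be a `d`-regular graph with adjacency eigenvalues `d = λ₁ ≥ λ₂ ≥ ... ≥ λₙ`
and orthonormal eigenvectors `v₁ = (1/√n)𝟙, v₂, ..., vₙ`. For `d ≥ 1` and
`t ≥ (1/2)√d`, `t > 0`, the matrix `E = Σ_{i : λᵢ ≥ t} (λᵢ/t)·vᵢvᵢᵀ` satisfies
`E_jj ≤ (3/4)·(√d/t)` for every `j`; in particular, if `t = √d` then `E_jj ≤ 1`. -/
theorem stmt17 {n d : ℕ} (hn : 0 < n) (hd : 1 ≤ d) (G : SimpleGraph (Fin n))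
    [DecidableRel G.Adj] (hreg : G.IsRegularOfDegree d)
    (v : Fin n → Fin n → ℝ) (lam : Fin n → ℝ)
    (hortho : ∀ i j, v i ⬝ᵥ v j = if i = j then (1 : ℝ) else 0)
    (heig : ∀ i, (G.adjMatrix ℝ) *ᵥ v i = lam i • v i)
    (hsort : ∀ i j : Fin n, i ≤ j → lam j ≤ lam i)
    (hv0 : v ⟨0, hn⟩ = fun _ => 1 / Real.sqrt n)
    (t : ℝ) (ht0 : 0 < t) (ht : Real.sqrt d / 2 ≤ t)
    (E : Matrix (Fin n) (Fin n) ℝ)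
    (hE : E = ∑ i ∈ Finset.univ.filter (fun i => t ≤ lam i),
      (lam i / t) • Matrix.vecMulVec (v i) (v i)) :
    (∀ j, E j j ≤ 3 / 4 * (Real.sqrt d / t)) ∧
    (t = Real.sqrt d → ∀ j, E j j ≤ 1) := by
  have hd0 : (0:ℝ) < d := by exact_mod_cast Nat.lt_of_lt_of_le Nat.zero_lt_one hd
  set s := Real.sqrt d with hs_def
  have hs : (0:ℝ) < s := Real.sqrt_pos.2 hd0
  have hss : s * s = d := Real.mul_self_sqrt (le_of_lt hd0)
  set A := G.adjMatrix ℝ with hA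
  set V : Matrix (Fin n) (Fin n) ℝ := Matrix.of v with hV
  have hVVt : V * Vᵀ = 1 := by
    ext i j
    have := hortho i j
    simpa [Matrix.mul_apply, Matrix.one_apply, hV, dotProduct] using this
  have hVtV : Vᵀ * V = 1 := mul_eq_one_comm.mp hVVt
  -- sum of rank one matrices applied to v k
  have hMvec : ∀ (c : Fin n → ℝ) (k : Fin n),
      (∑ i, c i • Matrix.vecMulVec (v i) (v i)) *ᵥ v k = c k • v k := by
    intro c k
    ext j
    have hsum : ∀ i, (∑ l, c i * (v i j * v i l) * v k l)
        = c i * v i j * (v i ⬝ᵥ v k) := by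
      intro i
      rw [dotProduct, Finset.mul_sum]
      exact Finset.sum_congr rfl (fun l _ => by ring)
    calc ((∑ i, c i • Matrix.vecMulVec (v i) (v i)) *ᵥ v k) j
        = ∑ i, ∑ l, c i * (v i j * v i l) * v k l := by
          simp [Matrix.mulVec, dotProduct, Matrix.vecMulVec_apply, Finset.sum_apply,
            Matrix.sum_apply, Finset.sum_mul]
          rw [Finset.sum_comm]
      _ = ∑ i, c i * v i j * (v i ⬝ᵥ v k) := by
          exact Finset.sum_congr rfl (fun i _ => hsum i)
      _ = c k * v k j := by
          simp [hortho]
      _ = (c k • v k) j := by simp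
  -- key: a matrix with the v's as eigenvectors equals the spectral sum
  have key : ∀ (c : Fin n → ℝ) (N : Matrix (Fin n) (Fin n) ℝ),
      (∀ k, N *ᵥ v k = c k • v k) →
      N = ∑ i, c i • Matrix.vecMulVec (v i) (v i) := by
    intro c N hN
    set M := ∑ i, c i • Matrix.vecMulVec (v i) (v i) with hM
    have h1 : N * Vᵀ = M * Vᵀ := by
      ext j k
      have l1 : (N * Vᵀ) j k = (N *ᵥ v k) j := by
        simp [Matrix.mul_apply, Matrix.mulVec, dotProduct, hV]
      have l2 : (M * Vᵀ) j k = (M *ᵥ v k) j := by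
        simp [Matrix.mul_apply, Matrix.mulVec, dotProduct, hV]
      rw [l1, l2, hN k, hMvec c k]
    calc N = N * (Vᵀ * V) := by rw [hVtV, Matrix.mul_one]
      _ = (N * Vᵀ) * V := by rw [Matrix.mul_assoc]
      _ = (M * Vᵀ) * V := by rw [h1]
      _ = M * (Vᵀ * V) := by rw [Matrix.mul_assoc]
      _ = M := by rw [hVtV, Matrix.mul_one]
  -- the matrix B = I + A/s
  set B : Matrix (Fin n) (Fin n) ℝ := 1 + s⁻¹ • A with hB
  have heigB : ∀ k, B *ᵥ v k = (1 + lam k / s) • v k := by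
    intro k
    rw [hB, Matrix.add_mulVec, Matrix.one_mulVec, Matrix.smul_mulVec, heig]
    ext j
    simp [div_eq_inv_mul, add_smul]
    ring
  have heigB2 : ∀ k, (B * B) *ᵥ v k = ((1 + lam k / s)^2) • v k := by
    intro k
    rw [← Matrix.mulVec_mulVec, heigB, Matrix.mulVec_smul, heigB, smul_smul, sq]
  have hB2spec : B * B = ∑ i, ((1 + lam i / s)^2) • Matrix.vecMulVec (v i) (v i) :=
    key _ _ heigB2
  -- diagonal of B*B is 2
  have hdiag : ∀ j, (B * B) j j = 2 := by
    intro j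
    have hexp : B * B = 1 + s⁻¹ • A + s⁻¹ • A + (s⁻¹ * s⁻¹) • (A * A) := by
      rw [hB]
      rw [Matrix.add_mul, Matrix.one_mul, Matrix.mul_add, Matrix.mul_one,
        smul_mul_smul_comm]
      abel
    have hAjj : A j j = 0 := by simp [hA]
    have hAAjj : (A * A) j j = (d : ℝ) := by
      rw [hA, SimpleGraph.adjMatrix_mul_self_apply_self, hreg j]
    rw [hexp]
    simp only [Matrix.add_apply, Matrix.smul_apply, Matrix.one_apply_eq, hAjj, hAAjj,
      smul_eq_mul, mul_zero]
    field_simp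
    nlinarith [hss]
  -- diagonal entries of spectral sums
  have hdiagsum : ∀ j, (B * B) j j = ∑ i, (1 + lam i / s)^2 * (v i j)^2 := by
    intro j
    rw [hB2spec]
    simp [Matrix.sum_apply, Matrix.vecMulVec_apply, sq]
  have hEdiag : ∀ j, E j j = ∑ i ∈ Finset.univ.filter (fun i => t ≤ lam i),
      (lam i / t) * (v i j)^2 := by
    intro j
    rw [hE]
    simp [Matrix.sum_apply, Matrix.vecMulVec_apply, sq]
  -- main bound
  have main : ∀ j, E j j ≤ s / (2 * t) := by
    intro j
    have step1 : E j j ≤ ∑ i ∈ Finset.univ.filter (fun i => t ≤ lam i),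
        (s / (4 * t)) * ((1 + lam i / s)^2 * (v i j)^2) := by
      rw [hEdiag]
      apply Finset.sum_le_sum
      intro i hi
      rw [Finset.mem_filter] at hi
      have hti : t ≤ lam i := hi.2
      have hcoef : lam i / t ≤ s / (4 * t) * (1 + lam i / s)^2 := by
        have key2 : 4 * (s * lam i) ≤ (s + lam i)^2 := by
          nlinarith [sq_nonneg (s - lam i)]
        have e : s / (4*t) * (1 + lam i/s)^2 = (s + lam i)^2 / (4 * t * s) := by
          field_simp
        rw [e, div_le_div_iff₀ ht0 (by positivity)]
        nlinarith [mul_le_mul_of_nonneg_right key2 (le_of_lt ht0)]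
      calc lam i / t * (v i j)^2 ≤ (s / (4 * t) * (1 + lam i / s)^2) * (v i j)^2 :=
            mul_le_mul_of_nonneg_right hcoef (sq_nonneg _)
        _ = (s / (4 * t)) * ((1 + lam i / s)^2 * (v i j)^2) := by ring
    have step2 : ∑ i ∈ Finset.univ.filter (fun i => t ≤ lam i),
        (s / (4 * t)) * ((1 + lam i / s)^2 * (v i j)^2)
        ≤ ∑ i, (s / (4 * t)) * ((1 + lam i / s)^2 * (v i j)^2) := by
      apply Finset.sum_le_sum_of_subset_of_nonneg (Finset.filter_subset _ _)
      intro i _ _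
      positivity
    have step3 : ∑ i, (s / (4 * t)) * ((1 + lam i / s)^2 * (v i j)^2)
        = (s / (4 * t)) * 2 := by
      rw [← Finset.mul_sum, ← hdiagsum j, hdiag j]
    calc E j j ≤ (s / (4 * t)) * 2 := by
          exact le_trans step1 (le_trans step2 (le_of_eq step3))
      _ = s / (2 * t) := by field_simp; ring
  constructor
  · intro j
    calc E j j ≤ s / (2 * t) := main j
      _ ≤ 3 / 4 * (s / t) := by
          rw [div_le_iff₀ (by positivity)]
          have : 3 / 4 * (s / t) * (2 * t) = 3 / 2 * s := by field_simp; ring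
          rw [this]
          nlinarith [hs]
  · intro htd j
    calc E j j ≤ s / (2 * t) := main j
      _ ≤ 1 := by rw [htd]; rw [div_le_one (by positivity)]; nlinarith [hs]
end
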